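/- arXiv:2009.03879 — 13 statements merged into one kernel-verified Lean document; each statement's English description precedes it below -/
import Mathlib

section
/- Let sequences of non-negative reals (a_j)_{j≤n}, (b_k)_{k≤m}, (c_j)_{j≤n}, (d_k)_{k≤m} be given. Then a_j·d_k ≥ b_k·c_j for all j ≤ n and k ≤ m if and only if for all sequences of non-negative reals (r_j)_{j≤n}, (s_k)_{k≤m} such that Σ r_j a_j + Σ s_k b_k > 0 and Σ r_j c_j + Σ s_k d_k > 0, we have (Σ r_j a_j)/(Σ r_j a_j + Σ s_k b_k) ≥ (Σ r_j c_j)/(Σ r_j c_j + Σ s_k d_k). -/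
open Finset

theorem robust_bayes_arithmetic (n m : ℕ) (a c : Fin n → ℝ) (b d : Fin m → ℝ)
    (ha : ∀ j, 0 ≤ a j) (hb : ∀ k, 0 ≤ b k) (hc : ∀ j, 0 ≤ c j) (hd : ∀ k, 0 ≤ d k) :
    (∀ j k, b k * c j ≤ a j * d k) ↔
      ∀ (r : Fin n → ℝ) (s : Fin m → ℝ), (∀ j, 0 ≤ r j) → (∀ k, 0 ≤ s k) →
        0 < (∑ j, r j * a j) + ∑ k, s k * b k →
        0 < (∑ j, r j * c j) + ∑ k, s k * d k →
        (∑ j, r j * c j) / ((∑ j, r j * c j) + ∑ k, s k * d k) ≤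
          (∑ j, r j * a j) / ((∑ j, r j * a j) + ∑ k, s k * b k) := by
  constructor
  · intro h r s hr hs h1 h2
    set A := ∑ j, r j * a j with hA
    set B := ∑ k, s k * b k with hB
    set C := ∑ j, r j * c j with hC
    set D := ∑ k, s k * d k with hD
    have hA0 : 0 ≤ A := Finset.sum_nonneg fun j _ => mul_nonneg (hr j) (ha j)
    have hB0 : 0 ≤ B := Finset.sum_nonneg fun k _ => mul_nonneg (hs k) (hb k)
    have hC0 : 0 ≤ C := Finset.sum_nonneg fun j _ => mul_nonneg (hr j) (hc j)
    have hD0 : 0 ≤ D := Finset.sum_nonneg fun k _ => mul_nonneg (hs k) (hd k)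
    have key : B * C ≤ A * D := by
      rw [hB, hC, hA, hD, Finset.sum_mul_sum, Finset.sum_mul_sum, Finset.sum_comm]
      apply Finset.sum_le_sum
      intro j _
      apply Finset.sum_le_sum
      intro k _
      have := h j k
      have hsk := hs k
      have hrj := hr j
      nlinarith [mul_nonneg hsk hrj]
    rw [div_le_div_iff₀ h2 h1]
    nlinarith
  · intro h j k
    classical
    set r : Fin n → ℝ := fun i => if i = j then 1 else 0 with hr
    set s : Fin m → ℝ := fun i => if i = k then 1 else 0 with hs
    have hrA : ∑ i, r i * a i = a j := by
      rw [hr]; simp [Finset.sum_ite_eq', ite_mul]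
    have hsB : ∑ i, s i * b i = b k := by
      rw [hs]; simp [Finset.sum_ite_eq', ite_mul]
    have hrC : ∑ i, r i * c i = c j := by
      rw [hr]; simp [Finset.sum_ite_eq', ite_mul]
    have hsD : ∑ i, s i * d i = d k := by
      rw [hs]; simp [Finset.sum_ite_eq', ite_mul]
    by_cases h1 : 0 < a j + b k
    · by_cases h2 : 0 < c j + d k
      · have := h r s (fun i => by rw [hr]; dsimp; split <;> norm_num)
          (fun i => by rw [hs]; dsimp; split <;> norm_num)
          (by rw [hrA, hsB]; exact h1) (by rw [hrC, hsD]; exact h2)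
        rw [hrA, hsB, hrC, hsD, div_le_div_iff₀ h2 h1] at this
        nlinarith
      · have hcj : c j = 0 := by nlinarith [hc j, hd k]
        have hdk : d k = 0 := by nlinarith [hc j, hd k]
        simp [hcj, hdk]
    · have haj : a j = 0 := by nlinarith [ha j, hb k]
      have hbk : b k = 0 := by nlinarith [ha j, hb k]
      simp [haj, hbk]
end

section
/- Let Θ be a finite parameter space, H₁, H₂ ⊆ Θ disjoint, and E, F outcomes of experiments 𝔼, 𝔽 with likelihood functions P^𝔼_θ, P^𝔽_θ (probability measures on finite sample spaces). Then the following are equivalent: (i) for every prior Q on Θ with Q^𝔽(F ∩ (H₁ ∪ H₂)) > 0, one has Q^𝔼(E ∩ (H₁ ∪ H₂)) > 0 and Q^𝔼(H₁ | E ∩ (H₁ ∪ H₂)) ≥ Q^𝔽(H₁ | F ∩ (H₁ ∪ H₂)); (ii) (1) for all θ ∈ H₁ ∪ H₂, P^𝔽_θ(F) > 0 implies P^𝔼_θ(E) > 0, and (2) for all θ₁ ∈ H₁, θ₂ ∈ H₂, P^𝔼_{θ₁}(E)·P^𝔽_{θ₂}(F) ≥ P^𝔼_{θ₂}(E)·P^𝔽_{θ₁}(F).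 -/
open Finset

/-- Bayesian support of `H₁` over `H₂` by `E` at least as much as `F`
(for every prior) is equivalent to the likelihood-ratio conditions.
Likelihoods of the fixed outcomes `E`, `F` are represented by the functions
`PE θ = P^𝔼_θ(E)` and `PF θ = P^𝔽_θ(F)`, so that the joint distribution satisfies
`Q^𝔼(E ∩ H) = ∑ θ ∈ H, Q θ * PE θ`. -/
theorem bayesian_support_iff_likelihood {Θ : Type*} [Fintype Θ] [DecidableEq Θ]
    (H1 H2 : Finset Θ) (hdisj : Disjoint H1 H2)
    (PE PF : Θ → ℝ)
    (hPE0 : ∀ θ, 0 ≤ PE θ) (hPE1 : ∀ θ, PE θ ≤ 1)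
    (hPF0 : ∀ θ, 0 ≤ PF θ) (hPF1 : ∀ θ, PF θ ≤ 1) :
    ((∀ Q : Θ → ℝ, (∀ θ, 0 ≤ Q θ) → (∑ θ, Q θ) = 1 →
        0 < (∑ θ ∈ H1 ∪ H2, Q θ * PF θ) →
        0 < (∑ θ ∈ H1 ∪ H2, Q θ * PE θ) ∧
          (∑ θ ∈ H1, Q θ * PF θ) / (∑ θ ∈ H1 ∪ H2, Q θ * PF θ) ≤
            (∑ θ ∈ H1, Q θ * PE θ) / (∑ θ ∈ H1 ∪ H2, Q θ * PE θ))
      ↔ ((∀ θ ∈ H1 ∪ H2, 0 < PF θ → 0 < PE θ) ∧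
          ∀ θ1 ∈ H1, ∀ θ2 ∈ H2, PE θ2 * PF θ1 ≤ PE θ1 * PF θ2)) := by
  constructor
  · intro h
    constructor
    · -- part 1: point mass prior
      intro θ hθ hPFθ
      have key : ∀ (s : Finset Θ) (P : Θ → ℝ),
          (∑ x ∈ s, (if x = θ then (1:ℝ) else 0) * P x) = if θ ∈ s then P θ else 0 := by
        intro s P
        simp only [ite_mul, zero_mul, one_mul, Finset.sum_ite_eq']
      obtain ⟨h1, _⟩ := h (fun x => if x = θ then 1 else 0)
        (by intro x; split <;> norm_num)
        (by simp)
        (by rw [key]; simpa [hθ] using hPFθ)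
      rw [key] at h1
      simpa [hθ] using h1
    · -- part 2: two-point prior
      intro θ1 hθ1 θ2 hθ2
      have hne : θ1 ≠ θ2 := fun hh => Finset.disjoint_left.mp hdisj hθ1 (hh ▸ hθ2)
      by_cases hF : 0 < PF θ1 + PF θ2
      · set Q : Θ → ℝ := fun x => (if x = θ1 then (1:ℝ)/2 else 0) + (if x = θ2 then 1/2 else 0)
          with hQ
        have key : ∀ (s : Finset Θ) (P : Θ → ℝ),
            (∑ x ∈ s, Q x * P x) =
              (if θ1 ∈ s then P θ1 / 2 else 0) + (if θ2 ∈ s then P θ2 / 2 else 0) := by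
          intro s P
          simp only [hQ, add_mul, Finset.sum_add_distrib, ite_mul, zero_mul,
            Finset.sum_ite_eq']
          split_ifs <;> ring
        have h1u : θ1 ∈ H1 ∪ H2 := Finset.mem_union_left _ hθ1
        have h2u : θ2 ∈ H1 ∪ H2 := Finset.mem_union_right _ hθ2
        have h2n1 : θ2 ∉ H1 := Finset.disjoint_right.mp hdisj hθ2
        obtain ⟨hE, hr⟩ := h Q
          (by intro x; simp only [hQ]; split_ifs <;> norm_num)
          (by
            simp only [hQ, Finset.sum_add_distrib, Finset.sum_ite_eq']
            simp [hne]
            norm_num)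
          (by rw [key]; simp only [if_pos h1u, if_pos h2u]; linarith)
        simp only [key] at hE hr
        simp only [if_pos h1u, if_pos h2u, if_pos hθ1, if_neg h2n1, add_zero] at hE hr
        rw [div_le_div_iff₀ (by linarith) hE] at hr
        nlinarith [hr]
      · have hf1 : PF θ1 = 0 := le_antisymm (by nlinarith [hPF0 θ1, hPF0 θ2]) (hPF0 θ1)
        have hf2 : PF θ2 = 0 := le_antisymm (by nlinarith [hPF0 θ1, hPF0 θ2]) (hPF0 θ2)
        simp [hf1, hf2]
  · rintro ⟨h1, h2⟩ Q hQ0 hQ1 hSF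
    have hterm : ∀ s : Finset Θ, ∀ P : Θ → ℝ, (∀ θ, 0 ≤ P θ) →
        (0:ℝ) ≤ ∑ θ ∈ s, Q θ * P θ := fun s P hP =>
      Finset.sum_nonneg fun θ _ => mul_nonneg (hQ0 θ) (hP θ)
    -- find a θ witnessing positivity
    obtain ⟨θ, hθmem, hθpos⟩ : ∃ θ ∈ H1 ∪ H2, 0 < Q θ * PF θ := by
      by_contra hc
      push_neg at hc
      have : (∑ θ ∈ H1 ∪ H2, Q θ * PF θ) ≤ 0 := Finset.sum_nonpos hc
      linarith
    have hQθ : 0 < Q θ := by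
      rcases (hQ0 θ).lt_or_eq with h | h
      · exact h
      · exfalso; rw [← h] at hθpos; simp at hθpos
    have hPFθ : 0 < PF θ := by
      rcases (hPF0 θ).lt_or_eq with h | h
      · exact h
      · exfalso; rw [← h] at hθpos; simp at hθpos
    have hPEθ : 0 < PE θ := h1 θ hθmem hPFθ
    have hSE : 0 < (∑ θ ∈ H1 ∪ H2, Q θ * PE θ) :=
      lt_of_lt_of_le (mul_pos hQθ hPEθ)
        (Finset.single_le_sum (fun i _ => mul_nonneg (hQ0 i) (hPE0 i)) hθmem)
    refine ⟨hSE, ?_⟩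
    rw [div_le_div_iff₀ hSF hSE]
    rw [Finset.sum_union hdisj, Finset.sum_union hdisj]
    have cross : (∑ θ ∈ H1, Q θ * PF θ) * (∑ θ ∈ H2, Q θ * PE θ) ≤
        (∑ θ ∈ H1, Q θ * PE θ) * (∑ θ ∈ H2, Q θ * PF θ) := by
      rw [Finset.sum_mul_sum, Finset.sum_mul_sum]
      refine Finset.sum_le_sum fun a ha => Finset.sum_le_sum fun b hb => ?_
      nlinarith [mul_le_mul_of_nonneg_left (h2 a ha b hb) (mul_nonneg (hQ0 a) (hQ0 b))]
    nlinarith [cross]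
end

section
/- Let Θ be a finite parameter space, H₁, H₂ ⊆ Θ disjoint, and E an outcome of experiment 𝔼 with likelihoods P_θ. Then E Bayesian-favors H₁ over H₂ (i.e., for every prior Q with Q(H₁ ∪ H₂) > 0, Q(E ∩ (H₁ ∪ H₂)) > 0 and Q(H₁ | E ∩ (H₁ ∪ H₂)) ≥ Q(H₁ | H₁ ∪ H₂)) if and only if (1) P_θ(E) > 0 for all θ ∈ H₁ ∪ H₂ and (2) P_{θ₁}(E) ≥ P_{θ₂}(E) for all θ₁ ∈ H₁, θ₂ ∈ H₂. -/
open Finset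

/-- `E` Bayesian-favors `H₁` over `H₂` iff the likelihood conditions of
the weak law of likelihood hold.  The likelihood of the fixed outcome `E` is
represented by `PE θ = P_θ(E)`, so the joint distribution gives
`Q(E ∩ H) = ∑ θ ∈ H, Q θ * PE θ` and `Q(H) = ∑ θ ∈ H, Q θ`. -/
theorem bayesian_favoring_iff_likelihood {Θ : Type*} [Fintype Θ] [DecidableEq Θ]
    (H1 H2 : Finset Θ) (hdisj : Disjoint H1 H2)
    (PE : Θ → ℝ) (hPE0 : ∀ θ, 0 ≤ PE θ) (hPE1 : ∀ θ, PE θ ≤ 1) :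
    ((∀ Q : Θ → ℝ, (∀ θ, 0 ≤ Q θ) → (∑ θ, Q θ) = 1 →
        0 < (∑ θ ∈ H1 ∪ H2, Q θ) →
        0 < (∑ θ ∈ H1 ∪ H2, Q θ * PE θ) ∧
          (∑ θ ∈ H1, Q θ) / (∑ θ ∈ H1 ∪ H2, Q θ) ≤
            (∑ θ ∈ H1, Q θ * PE θ) / (∑ θ ∈ H1 ∪ H2, Q θ * PE θ))
      ↔ ((∀ θ ∈ H1 ∪ H2, 0 < PE θ) ∧
          ∀ θ1 ∈ H1, ∀ θ2 ∈ H2, PE θ2 ≤ PE θ1)) := by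
  constructor
  · intro h
    have hpos : ∀ θ ∈ H1 ∪ H2, 0 < PE θ := by
      intro θ hθ
      set Q : Θ → ℝ := fun θ' => if θ' = θ then 1 else 0 with hQ
      have h0 : ∀ θ', 0 ≤ Q θ' := by intro θ'; simp [hQ]; split <;> norm_num
      have h1 : (∑ θ', Q θ') = 1 := by simp [hQ]
      have h2 : (∑ θ' ∈ H1 ∪ H2, Q θ') = 1 := by
        simp [hQ, Finset.sum_ite_eq', hθ]
      have h3 : (∑ θ' ∈ H1 ∪ H2, Q θ' * PE θ') = PE θ := by
        simp [hQ, ite_mul, Finset.sum_ite_eq', hθ]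
      have := (h Q h0 h1 (by rw [h2]; norm_num)).1
      rwa [h3] at this
    refine ⟨hpos, ?_⟩
    intro θ1 h1m θ2 h2m
    have hne : θ1 ≠ θ2 := by
      intro he; exact (Finset.disjoint_left.mp hdisj h1m) (he ▸ h2m)
    have h2n1 : θ2 ∉ H1 := Finset.disjoint_right.mp hdisj h2m
    have h1n2 : θ1 ∉ H2 := Finset.disjoint_left.mp hdisj h1m
    set Q : Θ → ℝ := fun θ' => (if θ' = θ1 then (1:ℝ)/2 else 0) +
        (if θ' = θ2 then (1:ℝ)/2 else 0) with hQ
    have h0 : ∀ θ', 0 ≤ Q θ' := by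
      intro θ'; simp only [hQ]
      have : (0:ℝ) ≤ (if θ' = θ1 then (1:ℝ)/2 else 0) := by split <;> norm_num
      have : (0:ℝ) ≤ (if θ' = θ2 then (1:ℝ)/2 else 0) := by split <;> norm_num
      positivity
    have hsum1 : (∑ θ', Q θ') = 1 := by
      simp [hQ, Finset.sum_add_distrib, Finset.sum_ite_eq']
      norm_num
    have hsH1 : (∑ θ' ∈ H1, Q θ') = 1/2 := by
      simp [hQ, Finset.sum_add_distrib, Finset.sum_ite_eq', h1m, h2n1]
    have hsU : (∑ θ' ∈ H1 ∪ H2, Q θ') = 1 := by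
      simp [hQ, Finset.sum_add_distrib, Finset.sum_ite_eq',
        Finset.mem_union.mpr (Or.inl h1m), Finset.mem_union.mpr (Or.inr h2m)]
      norm_num
    have hsH1E : (∑ θ' ∈ H1, Q θ' * PE θ') = PE θ1 / 2 := by
      simp [hQ, add_mul, ite_mul, Finset.sum_add_distrib, Finset.sum_ite_eq', h1m, h2n1]
      ring
    have hsUE : (∑ θ' ∈ H1 ∪ H2, Q θ' * PE θ') = (PE θ1 + PE θ2) / 2 := by
      simp [hQ, add_mul, ite_mul, Finset.sum_add_distrib, Finset.sum_ite_eq',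
        Finset.mem_union.mpr (Or.inl h1m), Finset.mem_union.mpr (Or.inr h2m)]
      ring
    obtain ⟨hEpos, hineq⟩ := h Q h0 hsum1 (by rw [hsU]; norm_num)
    rw [hsUE] at hEpos
    rw [hsH1, hsU, hsH1E, hsUE] at hineq
    have hd : (0:ℝ) < (PE θ1 + PE θ2) / 2 := hEpos
    rw [div_one, div_le_div_iff₀ (by norm_num) hd] at hineq
    nlinarith [hineq]
  · rintro ⟨hpos, hmono⟩ Q hQ0 hQ1 hQpos
    obtain ⟨θ0, hθ0m, hθ0p⟩ : ∃ θ ∈ H1 ∪ H2, 0 < Q θ := by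
      by_contra hc
      push_neg at hc
      have : (∑ θ ∈ H1 ∪ H2, Q θ) ≤ 0 :=
        Finset.sum_nonpos hc
      linarith
    have hEpos : 0 < (∑ θ ∈ H1 ∪ H2, Q θ * PE θ) := by
      apply Finset.sum_pos' (fun θ hθ => mul_nonneg (hQ0 θ) (hPE0 θ))
      exact ⟨θ0, hθ0m, mul_pos hθ0p (hpos θ0 hθ0m)⟩
    refine ⟨hEpos, ?_⟩
    rw [div_le_div_iff₀ hQpos hEpos]
    rw [Finset.sum_union hdisj, Finset.sum_union hdisj]
    have key : (∑ θ ∈ H1, Q θ) * (∑ θ ∈ H2, Q θ * PE θ) ≤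
        (∑ θ ∈ H1, Q θ * PE θ) * (∑ θ ∈ H2, Q θ) := by
      rw [Finset.sum_mul_sum, Finset.sum_mul_sum]
      apply Finset.sum_le_sum
      intro θ1 h1m
      apply Finset.sum_le_sum
      intro θ2 h2m
      nlinarith [mul_le_mul_of_nonneg_left (hmono θ1 h1m θ2 h2m)
        (mul_nonneg (hQ0 θ1) (hQ0 θ2))]
    nlinarith [key]
end

section
/- Let Θ be a finite parameter space and let E, F be outcomes of experiments 𝔼, 𝔽 with likelihood functions P^𝔼_θ, P^𝔽_θ. Then the following are equivalent: (1) there exists c > 0 with P^𝔼_θ(E) = c·P^𝔽_θ(F) for all θ ∈ Θ; (2) for every prior Q on Θ, Q^𝔼(E) > 0 iff Q^𝔽(F) > 0, and Q^𝔼(H|E) = Q^𝔽(H|F) for all H ⊆ Θ whenever both conditional probabilities are defined. -/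
open Finset

/-- the likelihood principle condition (proportional likelihood functions)
is equivalent to Bayesian posterior equivalence for every prior.  Likelihoods of the
fixed outcomes `E`, `F` are represented by `PE θ = P^𝔼_θ(E)` and `PF θ = P^𝔽_θ(F)`,
so that `Q^𝔼(E) = ∑ θ, Q θ * PE θ` and `Q^𝔼(H ∩ E) = ∑ θ ∈ H, Q θ * PE θ`. -/
theorem lp_iff_posterior_equivalent {Θ : Type*} [Fintype Θ] [DecidableEq Θ]
    (PE PF : Θ → ℝ)
    (hPE0 : ∀ θ, 0 ≤ PE θ) (hPE1 : ∀ θ, PE θ ≤ 1)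
    (hPF0 : ∀ θ, 0 ≤ PF θ) (hPF1 : ∀ θ, PF θ ≤ 1) :
    ((∃ c : ℝ, 0 < c ∧ ∀ θ, PE θ = c * PF θ)
      ↔ (∀ Q : Θ → ℝ, (∀ θ, 0 ≤ Q θ) → (∑ θ, Q θ) = 1 →
          (0 < (∑ θ, Q θ * PE θ) ↔ 0 < (∑ θ, Q θ * PF θ)) ∧
          (0 < (∑ θ, Q θ * PE θ) → 0 < (∑ θ, Q θ * PF θ) →
            ∀ H : Finset Θ,
              (∑ θ ∈ H, Q θ * PE θ) / (∑ θ, Q θ * PE θ) =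
                (∑ θ ∈ H, Q θ * PF θ) / (∑ θ, Q θ * PF θ)))) := by
  constructor
  · rintro ⟨c, hc, hcf⟩ Q hQ0 hQ1
    have hE : ∀ s : Finset Θ, (∑ θ ∈ s, Q θ * PE θ) = c * ∑ θ ∈ s, Q θ * PF θ := by
      intro s
      rw [Finset.mul_sum]
      exact Finset.sum_congr rfl fun θ _ => by rw [hcf θ]; ring
    constructor
    · rw [hE]
      constructor
      · intro h; by_contra hns; push_neg at hns; nlinarith
      · intro h; positivity
    · intro _ _ H
      rw [hE, hE, mul_div_mul_left _ _ (ne_of_gt hc)]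
  · intro h
    by_cases hF : ∀ θ, PF θ = 0
    · refine ⟨1, one_pos, fun θ => ?_⟩
      -- delta prior at θ
      set Q : Θ → ℝ := fun x => if x = θ then 1 else 0 with hQdef
      have h1 := (h Q (fun x => by by_cases hx : x = θ <;> simp [hQdef, hx])
        (by simp [hQdef])).1
      have hsE : (∑ x, Q x * PE x) = PE θ := by
        simp [hQdef, ite_mul]
      have hsF : (∑ x, Q x * PF x) = PF θ := by
        simp [hQdef, ite_mul]
      rw [hsE, hsF] at h1
      have : ¬ 0 < PE θ := by rw [h1, hF θ]; simp
      simp [hF θ]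
      linarith [hPE0 θ, not_lt.mp this]
    · push_neg at hF
      obtain ⟨θ₀, hθ₀⟩ := hF
      have hF0 : 0 < PF θ₀ := lt_of_le_of_ne (hPF0 θ₀) (Ne.symm hθ₀)
      -- delta prior at θ₀ gives PE θ₀ > 0
      have hE0 : 0 < PE θ₀ := by
        set Q : Θ → ℝ := fun x => if x = θ₀ then 1 else 0 with hQdef
        have h1 := (h Q (fun x => by by_cases hx : x = θ₀ <;> simp [hQdef, hx])
          (by simp [hQdef])).1
        have hsE : (∑ x, Q x * PE x) = PE θ₀ := by simp [hQdef, ite_mul]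
        have hsF : (∑ x, Q x * PF x) = PF θ₀ := by simp [hQdef, ite_mul]
        rw [hsE, hsF] at h1
        exact h1.2 hF0
      refine ⟨PE θ₀ / PF θ₀, by positivity, fun θ => ?_⟩
      by_cases hθ : θ = θ₀
      · subst hθ; field_simp
      · -- two-point prior
        have hθ' : ¬ θ₀ = θ := fun e => hθ e.symm
        set Q : Θ → ℝ := fun x => (if x = θ₀ then (1:ℝ)/2 else 0) + (if x = θ then 1/2 else 0) with hQdef
        have hQ0 : ∀ x, 0 ≤ Q x := fun x => by
          by_cases h1 : x = θ₀ <;> by_cases h2 : x = θ <;> simp [hQdef, h1, h2, hθ', hθ] <;> norm_num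
        have hQ1 : (∑ x, Q x) = 1 := by
          simp [hQdef, Finset.sum_add_distrib]; norm_num
        have hsE : (∑ x, Q x * PE x) = PE θ₀ / 2 + PE θ / 2 := by
          simp [hQdef, add_mul, ite_mul, Finset.sum_add_distrib]
          ring
        have hsF : (∑ x, Q x * PF x) = PF θ₀ / 2 + PF θ / 2 := by
          simp [hQdef, add_mul, ite_mul, Finset.sum_add_distrib]
          ring
        obtain ⟨h1, h2⟩ := h Q hQ0 hQ1
        have hEpos : 0 < (∑ x, Q x * PE x) := by
          rw [hsE]; nlinarith [hPE0 θ]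
        have hFpos : 0 < (∑ x, Q x * PF x) := h1.1 hEpos
        have h3 := h2 hEpos hFpos {θ₀}
        have hsE1 : (∑ x ∈ {θ₀}, Q x * PE x) = PE θ₀ / 2 := by
          simp [hQdef, hθ, hθ']
          ring
        have hsF1 : (∑ x ∈ {θ₀}, Q x * PF x) = PF θ₀ / 2 := by
          simp [hQdef, hθ, hθ']
          ring
        rw [hsE1, hsF1, hsE, hsF] at h3
        rw [hsE] at hEpos
        rw [hsF] at hFpos
        rw [div_eq_div_iff (by linarith) (by linarith)] at h3
        field_simp
        nlinarith [h3]
end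

section
/- Let Θ be a finite parameter space and E, F outcomes of experiments 𝔼, 𝔽. Then E and F are Bayesian posterior equivalent (for every prior Q: Q^𝔼(E) > 0 iff Q^𝔽(F) > 0, and Q^𝔼(H|E) = Q^𝔽(H|F) for all H ⊆ Θ when defined) if and only if they are Bayesian favoring equivalent (for all disjoint H₁, H₂ ⊆ Θ and every prior Q: Q^𝔼(E ∩ (H₁∪H₂)) > 0 iff Q^𝔽(F ∩ (H₁∪H₂)) > 0, and Q^𝔼(H₁ | E ∩ (H₁∪H₂)) = Q^𝔽(H₁ | F ∩ (H₁∪H₂)) whenever both are defined). -/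
open Finset

/-- Bayesian posterior equivalence is equivalent to Bayesian favoring
equivalence.  Likelihoods of the fixed outcomes `E`, `F` are represented by
`PE θ = P^𝔼_θ(E)` and `PF θ = P^𝔽_θ(F)`, so that
`Q^𝔼(E ∩ H) = ∑ θ ∈ H, Q θ * PE θ`. -/
theorem posterior_equiv_iff_favoring_equiv {Θ : Type*} [Fintype Θ] [DecidableEq Θ]
    (PE PF : Θ → ℝ)
    (hPE0 : ∀ θ, 0 ≤ PE θ) (hPE1 : ∀ θ, PE θ ≤ 1)
    (hPF0 : ∀ θ, 0 ≤ PF θ) (hPF1 : ∀ θ, PF θ ≤ 1) :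
    ((∀ Q : Θ → ℝ, (∀ θ, 0 ≤ Q θ) → (∑ θ, Q θ) = 1 →
        (0 < (∑ θ, Q θ * PE θ) ↔ 0 < (∑ θ, Q θ * PF θ)) ∧
        (0 < (∑ θ, Q θ * PE θ) → 0 < (∑ θ, Q θ * PF θ) →
          ∀ H : Finset Θ,
            (∑ θ ∈ H, Q θ * PE θ) / (∑ θ, Q θ * PE θ) =
              (∑ θ ∈ H, Q θ * PF θ) / (∑ θ, Q θ * PF θ)))
      ↔ (∀ H1 H2 : Finset Θ, Disjoint H1 H2 →
          ∀ Q : Θ → ℝ, (∀ θ, 0 ≤ Q θ) → (∑ θ, Q θ) = 1 →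
            (0 < (∑ θ ∈ H1 ∪ H2, Q θ * PE θ) ↔ 0 < (∑ θ ∈ H1 ∪ H2, Q θ * PF θ)) ∧
            (0 < (∑ θ ∈ H1 ∪ H2, Q θ * PE θ) → 0 < (∑ θ ∈ H1 ∪ H2, Q θ * PF θ) →
              (∑ θ ∈ H1, Q θ * PE θ) / (∑ θ ∈ H1 ∪ H2, Q θ * PE θ) =
                (∑ θ ∈ H1, Q θ * PF θ) / (∑ θ ∈ H1 ∪ H2, Q θ * PF θ)))) := by
  constructor
  · intro h H1 H2 _ Q hQ0 hQsum
    set H := H1 ∪ H2 with hHdef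
    by_cases hS0 : (∑ θ ∈ H, Q θ) = 0
    · have hz : ∀ θ ∈ H, Q θ = 0 :=
        (Finset.sum_eq_zero_iff_of_nonneg (fun θ _ => hQ0 θ)).mp hS0
      have hE : ∑ θ ∈ H, Q θ * PE θ = 0 :=
        Finset.sum_eq_zero fun θ hθ => by rw [hz θ hθ, zero_mul]
      have hF : ∑ θ ∈ H, Q θ * PF θ = 0 :=
        Finset.sum_eq_zero fun θ hθ => by rw [hz θ hθ, zero_mul]
      refine ⟨by rw [hE, hF], ?_⟩
      intro hE'
      rw [hE] at hE'
      exact absurd hE' (lt_irrefl 0)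
    · have hSpos : 0 < ∑ θ ∈ H, Q θ :=
        lt_of_le_of_ne (Finset.sum_nonneg fun θ _ => hQ0 θ) (Ne.symm hS0)
      set S := ∑ θ ∈ H, Q θ with hSdef
      set Q' : Θ → ℝ := fun θ => if θ ∈ H then Q θ / S else 0 with hQ'def
      have hQ'0 : ∀ θ, 0 ≤ Q' θ := fun θ => by
        by_cases hθ : θ ∈ H <;> simp [hQ'def, hθ, div_nonneg (hQ0 θ) hSpos.le]
      have hQ'sum : ∑ θ, Q' θ = 1 := by
        simp only [hQ'def]
        rw [Finset.sum_ite_mem, Finset.univ_inter, ← Finset.sum_div, div_self hS0]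
      have key : ∀ (g : Θ → ℝ) (T : Finset Θ), T ⊆ H →
          (∑ θ ∈ T, Q' θ * g θ) = (∑ θ ∈ T, Q θ * g θ) / S := by
        intro g T hT
        rw [Finset.sum_div]
        refine Finset.sum_congr rfl fun θ hθ => ?_
        simp only [hQ'def, if_pos (hT hθ)]
        ring
      have keyU : ∀ g : Θ → ℝ, (∑ θ, Q' θ * g θ) = (∑ θ ∈ H, Q θ * g θ) / S := by
        intro g
        rw [← key g H (Finset.Subset.refl H)]
        refine (Finset.sum_subset (Finset.subset_univ H) ?_).symm
        intro θ _ hθ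
        simp [hQ'def, hθ]
      obtain ⟨hiff, hpost⟩ := h Q' hQ'0 hQ'sum
      rw [keyU PE, keyU PF] at hiff
      have hdiv : ∀ a : ℝ, 0 < a / S ↔ 0 < a := fun a => by
        rw [lt_div_iff₀ hSpos, zero_mul]
      have hred : ∀ a b : ℝ, (a / S) / (b / S) = a / b := fun a b => by
        rcases eq_or_ne b 0 with hb | hb
        · simp [hb]
        · field_simp
      refine ⟨by rw [hdiv, hdiv] at hiff; exact hiff, ?_⟩
      intro hE hF
      have h1 := hpost (by rw [keyU PE]; exact (hdiv _).mpr hE)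
        (by rw [keyU PF]; exact (hdiv _).mpr hF) H1
      rw [keyU PE, keyU PF, key PE H1 Finset.subset_union_left,
          key PF H1 Finset.subset_union_left, hred, hred] at h1
      exact h1
  · intro h Q hQ0 hQsum
    have hmain := fun H : Finset Θ => h H Hᶜ disjoint_compl_right Q hQ0 hQsum
    have huniv : ∀ H : Finset Θ, H ∪ Hᶜ = (Finset.univ : Finset Θ) :=
      fun H => Finset.union_compl H
    constructor
    · have := (hmain ∅).1
      rwa [huniv] at this
    · intro hE hF H
      have := (hmain H).2
      rw [huniv] at this
      exact this hE hF
end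

section
/- In a qualitative conditional probability structure satisfying Axioms 1–6, if A is almost sure then for all non-null B: (i) A|A ∼ A|B; (ii) C|B ∼ (A∩C)|B for every C; (iii) C|B ∼ C|(B∩A) for every C. Dually, if A is null then C|B ∼ (C∪A)|B and C|B ∼ C|(B∪A) for all non-null B. -/
open Set

/-- `QNull le A` : the event `A` is null, i.e. `A|Δ ⪯ ∅|Δ` (Axiom 2). -/
def QNull {Δ : Type*} (le : Set Δ → Set Δ → Set Δ → Set Δ → Prop) (A : Set Δ) : Prop :=
  le A univ ∅ univ

/-- `QLt le A B C D` : `A|B ≺ C|D`, the strict part of the ordering. -/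
def QLt {Δ : Type*} (le : Set Δ → Set Δ → Set Δ → Set Δ → Prop) (A B C D : Set Δ) : Prop :=
  le A B C D ∧ ¬ le C D A B

/-- `QEquiv le A B C D` : `A|B ∼ C|D`, i.e. both directions of `⪯` hold. -/
def QEquiv {Δ : Type*} (le : Set Δ → Set Δ → Set Δ → Set Δ → Prop) (A B C D : Set Δ) : Prop :=
  le A B C D ∧ le C D A B

/-- A qualitative conditional probability structure on `Δ`: a relation
`le A B C D` (read `A|B ⪯ C|D`, meaningful when the conditioning events `B`, `D`
are non-null) satisfying Axioms 1–6 of Krantz et al. -/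
structure QCP (Δ : Type*) where
  le : Set Δ → Set Δ → Set Δ → Set Δ → Prop
  /-- Axiom 1: totality. -/
  total : ∀ A B C D, ¬ QNull le B → ¬ QNull le D → le A B C D ∨ le C D A B
  /-- Axiom 1: reflexivity. -/
  refl : ∀ A B, ¬ QNull le B → le A B A B
  /-- Axiom 1: transitivity. -/
  trans : ∀ A B C D E F, ¬ QNull le B → ¬ QNull le D → ¬ QNull le F →
      le A B C D → le C D E F → le A B E F
  /-- Axiom 2: the sure event is not null. -/
  univ_not_null : ¬ QNull le (univ : Set Δ)
  /-- Axiom 3: `A|A ∼ B|B`. -/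
  ax3_id : ∀ A B, ¬ QNull le A → ¬ QNull le B → QEquiv le A A B B
  /-- Axiom 3: `A|B ⪯ Δ|C` for non-null `C`. -/
  ax3_bound : ∀ A B C, ¬ QNull le B → ¬ QNull le C → le A B univ C
  /-- Axiom 4: `(A∩B)|B ∼ A|B`. -/
  ax4 : ∀ A B, ¬ QNull le B → QEquiv le (A ∩ B) B A B
  /-- Axiom 5: disjoint additivity. -/
  ax5 : ∀ A B A' B' C C', ¬ QNull le C → ¬ QNull le C' → A ∩ B = ∅ → A' ∩ B' = ∅ →
      le A C A' C' → le B C B' C' → le (A ∪ B) C (A' ∪ B') C'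
  /-- Axiom 5, strictness clause. -/
  ax5_strict : ∀ A B A' B' C C', ¬ QNull le C → ¬ QNull le C' → A ∩ B = ∅ → A' ∩ B' = ∅ →
      le A C A' C' → le B C B' C' → (QLt le A C A' C' ∨ QLt le B C B' C') →
      QLt le (A ∪ B) C (A' ∪ B') C'
  /-- Axiom 6a. -/
  ax6a : ∀ A B C A' B' C', C ⊆ B → B ⊆ A → C' ⊆ B' → B' ⊆ A' →
      ¬ QNull le A → ¬ QNull le B → ¬ QNull le A' → ¬ QNull le B' →
      le B A C' B' → le C B B' A' → le C A C' A'
  /-- Axiom 6a, strictness clause. -/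
  ax6a_strict : ∀ A B C A' B' C', C ⊆ B → B ⊆ A → C' ⊆ B' → B' ⊆ A' →
      ¬ QNull le A → ¬ QNull le B → ¬ QNull le A' → ¬ QNull le B' →
      le B A C' B' → le C B B' A' → (QLt le B A C' B' ∨ QLt le C B B' A') →
      QLt le C A C' A'
  /-- Axiom 6b. -/
  ax6b : ∀ A B C A' B' C', C ⊆ B → B ⊆ A → C' ⊆ B' → B' ⊆ A' →
      ¬ QNull le A → ¬ QNull le B → ¬ QNull le A' → ¬ QNull le B' →
      le B A B' A' → le C B C' B' → le C A C' A'
  /-- Axiom 6b, strictness clause. -/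
  ax6b_strict : ∀ A B C A' B' C', C ⊆ B → B ⊆ A → C' ⊆ B' → B' ⊆ A' →
      ¬ QNull le A → ¬ QNull le B → ¬ QNull le A' → ¬ QNull le B' →
      le B A B' A' → le C B C' B' → (QLt le B A B' A' ∨ QLt le C B C' B') →
      ¬ QNull le C → QLt le C A C' A'

section QCPLemmas

variable {Δ : Type*} (q : QCP Δ)

lemma qcp_empty_le (A C D : Set Δ) (hC : ¬ QNull q.le C) (hD : ¬ QNull q.le D) :
    q.le ∅ C A D := by
  by_contra h
  have htot : q.le A D ∅ C := (q.total ∅ C A D hC hD).resolve_left h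
  have h5 := q.ax5_strict A Aᶜ ∅ univ D C hD hC (inter_compl_self A) (empty_inter univ)
      htot (q.ax3_bound Aᶜ D C hD hC) (Or.inl ⟨htot, h⟩)
  rw [union_compl_self, empty_union] at h5
  exact h5.2 (q.ax3_bound univ C D hC hD)

lemma qcp_le_sure (A C D : Set Δ) (hC : ¬ QNull q.le C) (hD : ¬ QNull q.le D) :
    q.le A C D D := by
  have h1 : q.le A C univ D := q.ax3_bound A C D hC hD
  have h2 : q.le univ D D D := by
    have := (q.ax4 univ D hD).2
    rwa [univ_inter] at this
  exact q.trans _ _ _ _ _ _ hC hD hD h1 h2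

lemma qcp_mono {A A' : Set Δ} (C : Set Δ) (h : A ⊆ A') (hC : ¬ QNull q.le C) :
    q.le A C A' C := by
  have h5 := q.ax5 A ∅ A (A' \ A) C C hC hC (inter_empty A) (inter_diff_self A A')
      (q.refl A C hC) (qcp_empty_le q _ C C hC hC)
  rwa [union_empty, union_diff_cancel h] at h5

lemma qcp_null_subset {A N : Set Δ} (h : A ⊆ N) (hN : QNull q.le N) : QNull q.le A :=
  q.trans _ _ _ _ _ _ q.univ_not_null q.univ_not_null q.univ_not_null
    (qcp_mono q univ h q.univ_not_null) hN

lemma qcp_null_union {M N : Set Δ} (hM : QNull q.le M) (hN : QNull q.le N) :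
    QNull q.le (M ∪ N) := by
  have h5 := q.ax5 (M \ N) N ∅ ∅ univ univ q.univ_not_null q.univ_not_null
      diff_inter_self (empty_inter ∅)
      (qcp_null_subset q diff_subset hM) hN
  rwa [diff_union_self, empty_union] at h5

lemma qcp_not_null_compl {N : Set Δ} (hN : QNull q.le N) : ¬ QNull q.le Nᶜ := by
  intro h
  have := qcp_null_union q hN h
  rw [union_compl_self] at this
  exact q.univ_not_null this

lemma qcp_nested {A B C : Set Δ} (hCB : C ⊆ B) (hBA : B ⊆ A)
    (hA : ¬ QNull q.le A) (hB : ¬ QNull q.le B) (hC : ¬ QNull q.le C) :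
    q.le C A C B :=
  q.ax6a A B C B C C hCB hBA Subset.rfl hCB hA hB hB hC
    (qcp_le_sure q B A C hA hC) (q.refl C B hB)

lemma qcp_crux {N B : Set Δ} (hN : QNull q.le N) (hB : ¬ QNull q.le B) :
    q.le N B ∅ B := by
  suffices h : q.le (N ∩ B) B ∅ B from
    q.trans _ _ _ _ _ _ hB hB hB (q.ax4 N B hB).2 h
  set M := N ∩ B with hMdef
  have hMnull : QNull q.le M := qcp_null_subset q inter_subset_left hN
  have hMB : M ⊆ B := inter_subset_right
  by_contra hcon
  have h0 : QLt q.le ∅ B M B := ⟨qcp_empty_le q M B B hB hB, hcon⟩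
  set D := B \ M with hDdef
  have hDB : D ⊆ B := diff_subset
  have hDM : D ∪ M = B := diff_union_of_subset hMB
  have hDnn : ¬ QNull q.le D := by
    intro h
    apply hB
    rw [← hDM]
    exact qcp_null_union q h hMnull
  have hMc : ¬ QNull q.le Mᶜ := qcp_not_null_compl q hMnull
  have hDMc : D ⊆ Mᶜ := fun x hx => hx.2
  -- step 1 : D|B ≺ B|B
  have h1 : QLt q.le D B B B := by
    have := q.ax5_strict D ∅ D M B B hB hB (inter_empty D) diff_inter_self
        (q.refl D B hB) h0.1 (Or.inr h0)
    rwa [union_empty, hDM] at this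
  -- Mᶜ is almost sure: Δ|Δ ⪯ Mᶜ|Δ
  have hsure : q.le univ univ Mᶜ univ := by
    have := q.ax5 M Mᶜ ∅ Mᶜ univ univ q.univ_not_null q.univ_not_null
        (inter_compl_self M) (empty_inter Mᶜ) hMnull (q.refl Mᶜ univ q.univ_not_null)
    rwa [union_compl_self, empty_union] at this
  -- step 5: B|Δ ⪯ D|Mᶜ
  have h5 : q.le B univ D Mᶜ := by
    have hDD : q.le D univ D Mᶜ :=
      qcp_nested q hDMc (subset_univ Mᶜ) q.univ_not_null hMc hDnn
    have hM0 : q.le M univ ∅ Mᶜ :=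
      q.trans _ _ _ _ _ _ q.univ_not_null q.univ_not_null hMc hMnull
        (qcp_empty_le q ∅ univ Mᶜ q.univ_not_null hMc)
    have := q.ax5 D M D ∅ univ Mᶜ q.univ_not_null hMc diff_inter_self
        (inter_empty D) hDD hM0
    rwa [hDM, union_empty] at this
  -- step 6: D|B ⪯ Mᶜ|Δ
  have h6 : q.le D B Mᶜ univ :=
    q.trans _ _ _ _ _ _ hB q.univ_not_null q.univ_not_null
      (qcp_le_sure q D B univ hB q.univ_not_null) hsure
  -- step 7: strictness
  have h7 : ¬ q.le Mᶜ univ D B := by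
    intro hc
    have hBsure : q.le B B Mᶜ univ :=
      q.trans _ _ _ _ _ _ hB q.univ_not_null q.univ_not_null
        (qcp_le_sure q B B univ hB q.univ_not_null) hsure
    exact h1.2 (q.trans _ _ _ _ _ _ hB q.univ_not_null hB hBsure hc)
  have h8 := q.ax6a_strict univ B D univ Mᶜ D hDB (subset_univ B) hDMc (subset_univ Mᶜ)
      q.univ_not_null hB q.univ_not_null hMc h5 h6 (Or.inr ⟨h6, h7⟩)
  exact h8.2 (q.refl D univ q.univ_not_null)

lemma qcp_approx {N B X Y : Set Δ} (hN : QNull q.le N) (hB : ¬ QNull q.le B)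
    (h : (X ∩ B) \ N ⊆ Y) : q.le X B Y B := by
  have h1 : q.le ((X ∩ B) \ N) B Y B := qcp_mono q B h hB
  have h2 : q.le ((X ∩ B) ∩ N) B ∅ B :=
    qcp_crux q (qcp_null_subset q inter_subset_right hN) hB
  have hdisj : ((X ∩ B) \ N) ∩ ((X ∩ B) ∩ N) = ∅ := by
    ext x
    simp only [mem_inter_iff, mem_diff, mem_empty_iff_false, iff_false]
    tauto
  have h5 := q.ax5 ((X ∩ B) \ N) ((X ∩ B) ∩ N) Y ∅ B B hB hB hdisj (inter_empty Y) h1 h2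
  rw [diff_union_inter, union_empty] at h5
  exact q.trans _ _ _ _ _ _ hB hB hB (q.ax4 X B hB).2 h5

lemma qcp_cond {B₀ B₁ : Set Δ} (hsub : B₀ ⊆ B₁) (hnull : QNull q.le (B₁ \ B₀))
    (hB₀ : ¬ QNull q.le B₀) (hB₁ : ¬ QNull q.le B₁) (C : Set Δ) :
    QEquiv q.le C B₁ C B₀ := by
  set X := C ∩ B₀ with hXdef
  have hXB₀ : X ⊆ B₀ := inter_subset_right
  have q1a : q.le C B₁ X B₁ := by
    apply qcp_approx q hnull hB₁
    intro x hx
    exact ⟨hx.1.1, of_not_not fun h => hx.2 ⟨hx.1.2, h⟩⟩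
  have q1b : q.le X B₁ C B₁ := qcp_mono q B₁ inter_subset_left hB₁
  have q2 : QEquiv q.le X B₁ X B₀ := by
    by_cases hX : QNull q.le X
    · constructor
      · exact q.trans _ _ _ _ _ _ hB₁ hB₁ hB₀ (qcp_crux q hX hB₁)
          (qcp_empty_le q X B₁ B₀ hB₁ hB₀)
      · exact q.trans _ _ _ _ _ _ hB₀ hB₀ hB₁ (qcp_crux q hX hB₀)
          (qcp_empty_le q X B₀ B₁ hB₀ hB₁)
    · constructor
      · exact qcp_nested q hXB₀ hsub hB₁ hB₀ hX
      · have hsureB₀ : q.le B₀ B₀ B₀ B₁ := by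
          have h1 : q.le B₁ B₁ B₀ B₁ := by
            apply qcp_approx q hnull hB₁
            intro x hx
            exact of_not_not fun h => hx.2 ⟨hx.1.1, h⟩
          exact q.trans _ _ _ _ _ _ hB₀ hB₁ hB₁ (q.ax3_id B₀ B₁ hB₀ hB₁).1 h1
        exact q.ax6b B₀ B₀ X B₁ B₀ X hXB₀ Subset.rfl hXB₀ hsub hB₀ hB₀ hB₁ hB₀
          hsureB₀ (q.refl X B₀ hB₀)
  have q3 : QEquiv q.le X B₀ C B₀ := q.ax4 C B₀ hB₀
  constructor
  · exact q.trans _ _ _ _ _ _ hB₁ hB₀ hB₀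
      (q.trans _ _ _ _ _ _ hB₁ hB₁ hB₀ q1a q2.1) q3.1
  · exact q.trans _ _ _ _ _ _ hB₀ hB₁ hB₁
      (q.trans _ _ _ _ _ _ hB₀ hB₀ hB₁ q3.2 q2.2) q1b

end QCPLemmas

/-- almost-sure events can be intersected in, and null events unioned in,
without changing qualitative conditional probabilities. -/
theorem qcp_almost_sure_irrelevance {Δ : Type*} (q : QCP Δ) :
    (∀ A : Set Δ, QNull q.le Aᶜ →
      ∀ B : Set Δ, ¬ QNull q.le B →
        QEquiv q.le A A A B ∧
        (∀ C : Set Δ, QEquiv q.le C B (A ∩ C) B) ∧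
        (∀ C : Set Δ, QEquiv q.le C B C (B ∩ A))) ∧
    (∀ A : Set Δ, QNull q.le A →
      ∀ B : Set Δ, ¬ QNull q.le B →
        (∀ C : Set Δ, QEquiv q.le C B (C ∪ A) B) ∧
        (∀ C : Set Δ, QEquiv q.le C B C (B ∪ A))) := by

  constructor
  · intro A hA B hB
    have hAnn : ¬ QNull q.le A := by
      intro h
      have := qcp_null_union q h hA
      rw [union_compl_self] at this
      exact q.univ_not_null this
    refine ⟨⟨?_, qcp_le_sure q A B A hB hAnn⟩, fun C => ⟨?_, ?_⟩, fun C => ?_⟩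
    · -- A|A ⪯ A|B
      have h1 : q.le B B (A ∩ B) B := by
        apply qcp_approx q hA hB
        intro x hx
        exact ⟨of_not_not hx.2, hx.1.1⟩
      have h2 : q.le (A ∩ B) B A B := (q.ax4 A B hB).1
      exact q.trans _ _ _ _ _ _ hAnn hB hB
        (q.trans _ _ _ _ _ _ hAnn hB hB (q.ax3_id A B hAnn hB).1 h1) h2
    · -- C|B ⪯ (A∩C)|B
      apply qcp_approx q hA hB
      intro x hx
      exact ⟨of_not_not hx.2, hx.1.1⟩
    · -- (A∩C)|B ⪯ C|B
      exact qcp_mono q B inter_subset_right hB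
    · -- C|B ∼ C|(B∩A)
      have hdiffnull : QNull q.le (B \ (B ∩ A)) :=
        qcp_null_subset q (fun x hx => fun hxA => hx.2 ⟨hx.1, hxA⟩) hA
      have hBA : ¬ QNull q.le (B ∩ A) := by
        intro h
        apply hB
        have := qcp_null_union q h hdiffnull
        rwa [diff_self_inter, inter_union_diff] at this
      exact qcp_cond q inter_subset_left hdiffnull hBA hB C
  · intro A hA B hB
    refine ⟨fun C => ⟨qcp_mono q B subset_union_left hB, ?_⟩, fun C => ?_⟩
    · -- (C∪A)|B ⪯ C|B
      apply qcp_approx q hA hB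
      intro x hx
      exact hx.1.1.resolve_right hx.2
    · -- C|B ∼ C|(B∪A)
      have hB1 : ¬ QNull q.le (B ∪ A) := fun h => hB (qcp_null_subset q subset_union_left h)
      have hd : QNull q.le ((B ∪ A) \ B) :=
        qcp_null_subset q (fun x hx => hx.1.resolve_left hx.2) hA
      have h := qcp_cond q subset_union_left hd hB hB1 C
      exact ⟨h.2, h.1⟩
end

section
/- In a qualitative conditional probability structure satisfying Axioms 1–6, if X|Y ⪯ W|Y (Y non-null), then (X∩Y)|Δ ⪯ (W∩Y)|Δ; and conversely, if Y is non-null and (X∩Y)|Δ ⪯ (W∩Y)|Δ, then X|Y ⪯ W|Y. -/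
open Set

/-- `∅|C ⪯ E|C` for any `E` and non-null `C`. -/
lemma qcp_empty_le_s10 {Δ : Type*} (q : QCP Δ) (E C : Set Δ) (hC : ¬ QNull q.le C) :
    q.le ∅ C E C := by
  by_contra h
  have hle : q.le E C ∅ C := by
    rcases q.total ∅ C E C hC hC with h' | h'
    · exact absurd h' h
    · exact h'
  have hstrict := q.ax5_strict E Eᶜ ∅ univ C C hC hC (inter_compl_self E)
    (empty_inter univ) hle (q.ax3_bound Eᶜ C C hC hC) (Or.inl ⟨hle, h⟩)
  rw [union_compl_self, empty_union] at hstrict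
  exact hstrict.2 (q.refl univ C hC)

/-- If `E ⊆ Y`, `Y` is non-null and `E` is null, then `E|Y ⪯ ∅|Y`. -/
lemma qcp_null_cond {Δ : Type*} (q : QCP Δ) (E Y : Set Δ) (hEY : E ⊆ Y)
    (hY : ¬ QNull q.le Y) (hE : QNull q.le E) : q.le E Y ∅ Y := by
  by_contra h
  have hU := q.univ_not_null
  have hlt : QLt q.le ∅ Y E Y := ⟨qcp_empty_le_s10 q E Y hY, h⟩
  have hstrict := q.ax5_strict ∅ (Y \ E) E (Y \ E) Y Y hY hY
    (empty_inter _) (inter_diff_self E Y) hlt.1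
    (q.refl (Y \ E) Y hY) (Or.inl hlt)
  rw [empty_union, union_diff_cancel hEY] at hstrict
  by_cases hD : QNull q.le (Y \ E)
  · -- then Y = (Y\E) ∪ E is null, contradiction
    have := q.ax5 (Y \ E) E ∅ ∅ univ univ hU hU diff_inter_self
      (empty_inter ∅) hD hE
    rw [diff_union_of_subset hEY, empty_union] at this
    · exact hY this
  · have hlt2 := q.ax6b_strict univ Y (Y \ E) univ Y Y diff_subset (subset_univ Y)
      (subset_refl Y) (subset_univ Y) hU hY hU hY (q.refl Y univ hU)
      hstrict.1 (Or.inr hstrict) hD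
    -- but Y|Δ ⪯ (Y\E)|Δ since E is null
    have hle : q.le Y univ (Y \ E) univ := by
      have := q.ax5 (Y \ E) E (Y \ E) ∅ univ univ hU hU
        diff_inter_self (inter_empty _) (q.refl (Y \ E) univ hU) hE
      rwa [diff_union_of_subset hEY, union_empty] at this
    exact hlt2.2 hle

/-- for non-null `Y`, `X|Y ⪯ W|Y` iff `(X∩Y)|Δ ⪯ (W∩Y)|Δ`. -/
theorem qcp_conditional_intersection {Δ : Type*} (q : QCP Δ) (X W Y : Set Δ)
    (hY : ¬ QNull q.le Y) :
    (q.le X Y W Y → q.le (X ∩ Y) univ (W ∩ Y) univ) ∧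
    (q.le (X ∩ Y) univ (W ∩ Y) univ → q.le X Y W Y) := by
  have hU := q.univ_not_null
  have eX := q.ax4 X Y hY
  have eW := q.ax4 W Y hY
  constructor
  · intro h
    have h1 : q.le (X ∩ Y) Y (W ∩ Y) Y :=
      q.trans _ _ _ _ _ _ hY hY hY (q.trans _ _ _ _ _ _ hY hY hY eX.1 h) eW.2
    exact q.ax6b univ Y (X ∩ Y) univ Y (W ∩ Y) inter_subset_right (subset_univ Y)
      inter_subset_right (subset_univ Y) hU hY hU hY (q.refl Y univ hU) h1
  · intro h
    by_contra hn
    have hWX : q.le W Y X Y := by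
      rcases q.total X Y W Y hY hY with h' | h'
      · exact absurd h' hn
      · exact h'
    have hlt : QLt q.le (W ∩ Y) Y (X ∩ Y) Y := by
      refine ⟨q.trans _ _ _ _ _ _ hY hY hY (q.trans _ _ _ _ _ _ hY hY hY eW.1 hWX) eX.2, ?_⟩
      intro hc
      exact hn (q.trans _ _ _ _ _ _ hY hY hY (q.trans _ _ _ _ _ _ hY hY hY eX.2 hc) eW.1)
    by_cases hWY : QNull q.le (W ∩ Y)
    · have hXY : QNull q.le (X ∩ Y) := q.trans _ _ _ _ _ _ hU hU hU h hWY
      have h1 : q.le (X ∩ Y) Y ∅ Y := qcp_null_cond q (X ∩ Y) Y inter_subset_right hY hXY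
      have h2 : q.le (X ∩ Y) Y (W ∩ Y) Y :=
        q.trans _ _ _ _ _ _ hY hY hY h1 (qcp_empty_le_s10 q (W ∩ Y) Y hY)
      exact hn (q.trans _ _ _ _ _ _ hY hY hY (q.trans _ _ _ _ _ _ hY hY hY eX.2 h2) eW.1)
    · have hlt2 := q.ax6b_strict univ Y (W ∩ Y) univ Y (X ∩ Y) inter_subset_right
        (subset_univ Y) inter_subset_right (subset_univ Y) hU hY hU hY
        (q.refl Y univ hU) hlt.1 (Or.inr hlt) hWY
      exact hlt2.2 h
end

section
/- In a qualitative conditional probability structure satisfying Axioms 1–6, suppose A ⊇ B ⊇ C and A ⊇ B' ⊇ C. If B|A ⪰ C|B' and B is not null, then B'|A ⪰ C|B; moreover if B|A ≻ C|B' then B'|A ≻ C|B. -/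
open Set

/-- if `A ⊇ B ⊇ C`, `A ⊇ B' ⊇ C`, `B|A ⪰ C|B'` and `B` is not null,
then `B'|A ⪰ C|B`; strictly if the hypothesis is strict. -/
theorem qcp_swap_lemma {Δ : Type*} (q : QCP Δ) (A B B' C : Set Δ)
    (hBA : B ⊆ A) (hCB : C ⊆ B) (hB'A : B' ⊆ A) (hCB' : C ⊆ B')
    (hA : ¬ QNull q.le A) (hB' : ¬ QNull q.le B') (hB : ¬ QNull q.le B) :
    (q.le C B' B A → q.le C B B' A) ∧
    (QLt q.le C B' B A → QLt q.le C B B' A) := by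
  have key : ∀ h : q.le C B' B A, q.le B' A C B → QLt q.le B' A C B ∨ QLt q.le C B' B A →
      False := by
    intro h h' hs
    have := q.ax6a_strict A B' C A B C hCB' hB'A hCB hBA hA hB' hA hB h' h hs
    exact this.2 this.1
  have part1 : q.le C B' B A → q.le C B B' A := by
    intro h
    rcases q.total C B B' A hB hA with h1 | h1
    · exact h1
    · by_contra hc
      exact key h h1 (Or.inl ⟨h1, hc⟩)
  refine ⟨part1, ?_⟩
  rintro ⟨h, hn⟩
  refine ⟨part1 h, fun h' => key h h' (Or.inr ⟨h, hn⟩)⟩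
end

section
/- In a qualitative conditional probability structure satisfying Axioms 1–6, let H₁, H₂ be disjoint events. If E|H₁ ⪰ E|H₂ (both H₁, H₂ non-null), then E|H₁ ⪰ E|(H₁ ∪ H₂); the converse holds provided H₂ is non-null. Moreover, strictness of the hypothesis implies strictness of the conclusion in both directions. -/
open Set

namespace QCP

variable {Δ : Type*}

/-- `B|B` is maximal: `X|C ⪯ B|B`. -/
lemma max_le (q : QCP Δ) (X C B : Set Δ) (hC : ¬ QNull q.le C) (hB : ¬ QNull q.le B) :
    q.le X C B B := by
  have h1 : q.le X C univ B := q.ax3_bound X C B hC hB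
  have h2 : QEquiv q.le (univ ∩ B) B univ B := q.ax4 univ B hB
  rw [univ_inter] at h2
  exact q.trans X C univ B B B hC hB hB h1 h2.2

/-- `∅|B` is minimal: `∅|B ⪯ X|C`. -/
lemma min_le (q : QCP Δ) (X B C : Set Δ) (hB : ¬ QNull q.le B) (hC : ¬ QNull q.le C) :
    q.le ∅ B X C := by
  by_contra h
  have htot := (q.total ∅ B X C hB hC).resolve_left h
  have h4 := q.ax4 X C hC
  have hXt : q.le (X ∩ C) C ∅ B := q.trans (X ∩ C) C X C ∅ B hC hC hB h4.1 htot
  have hns : ¬ q.le ∅ B (X ∩ C) C := fun h0 =>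
    h (q.trans ∅ B (X ∩ C) C X C hB hC hC h0 h4.1)
  have hdisj1 : (X ∩ C) ∩ (C \ X) = ∅ := by
    ext x; simp only [mem_inter_iff, mem_diff, mem_empty_iff_false]; tauto
  have hdisj2 : (∅ : Set Δ) ∩ B = ∅ := empty_inter B
  have hcon := q.ax5_strict (X ∩ C) (C \ X) ∅ B C B hC hB hdisj1 hdisj2 hXt
    (q.max_le (C \ X) C B hC hB) (Or.inl ⟨hXt, hns⟩)
  rw [inter_comm, inter_union_diff, empty_union] at hcon
  exact hcon.2 ((q.ax3_id B C hB hC).1)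

/-- Monotonicity in the numerator. -/
lemma mono (q : QCP Δ) (A A' C : Set Δ) (h : A ⊆ A') (hC : ¬ QNull q.le C) :
    q.le A C A' C := by
  have hd1 : A ∩ (∅ : Set Δ) = ∅ := inter_empty A
  have hd2 : A ∩ (A' \ A) = ∅ := by
    ext x; simp only [mem_inter_iff, mem_diff, mem_empty_iff_false]; tauto
  have := q.ax5 A ∅ A (A' \ A) C C hC hC hd1 hd2 (q.refl A C hC)
    (q.min_le (A' \ A) C C hC hC)
  rwa [union_empty, union_diff_cancel h] at this

lemma null_mono (q : QCP Δ) {A N : Set Δ} (h : A ⊆ N) (hN : QNull q.le N) :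
    QNull q.le A :=
  q.trans A univ N univ ∅ univ q.univ_not_null q.univ_not_null q.univ_not_null
    (q.mono A N univ h q.univ_not_null) hN

/-- Complementation reverses the order. -/
lemma comp_le (q : QCP Δ) {X C X' C' : Set Δ} (hC : ¬ QNull q.le C) (hC' : ¬ QNull q.le C')
    (h : q.le X C X' C') : q.le (C' \ X') C' (C \ X) C := by
  by_contra hn
  have hr : q.le (C \ X) C (C' \ X') C' :=
    (q.total (C' \ X') C' (C \ X) C hC' hC).resolve_left hn
  have hXt : q.le (X ∩ C) C (X' ∩ C') C' :=
    q.trans (X ∩ C) C X' C' (X' ∩ C') C' hC hC' hC'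
      (q.trans (X ∩ C) C X C X' C' hC hC hC' (q.ax4 X C hC).1 h) (q.ax4 X' C' hC').2
  have hd1 : (X ∩ C) ∩ (C \ X) = ∅ := by
    ext x; simp only [mem_inter_iff, mem_diff, mem_empty_iff_false]; tauto
  have hd2 : (X' ∩ C') ∩ (C' \ X') = ∅ := by
    ext x; simp only [mem_inter_iff, mem_diff, mem_empty_iff_false]; tauto
  have hcon := q.ax5_strict (X ∩ C) (C \ X) (X' ∩ C') (C' \ X') C C' hC hC' hd1 hd2
    hXt hr (Or.inr ⟨hr, hn⟩)
  rw [inter_comm X C, inter_union_diff, inter_comm X' C', inter_union_diff] at hcon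
  exact hcon.2 ((q.ax3_id C C' hC hC').2)

/-- Complementation reverses the strict order. -/
lemma comp_lt (q : QCP Δ) {X C X' C' : Set Δ} (hC : ¬ QNull q.le C) (hC' : ¬ QNull q.le C')
    (h : QLt q.le X C X' C') : QLt q.le (C' \ X') C' (C \ X) C := by
  refine ⟨q.comp_le hC hC' h.1, fun h2 => ?_⟩
  have hXt : q.le (X ∩ C) C (X' ∩ C') C' :=
    q.trans (X ∩ C) C X' C' (X' ∩ C') C' hC hC' hC'
      (q.trans (X ∩ C) C X C X' C' hC hC hC' (q.ax4 X C hC).1 h.1) (q.ax4 X' C' hC').2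
  have hns : ¬ q.le (X' ∩ C') C' (X ∩ C) C := fun hx =>
    h.2 (q.trans X' C' (X ∩ C) C X C hC' hC hC
      (q.trans X' C' (X' ∩ C') C' (X ∩ C) C hC' hC' hC (q.ax4 X' C' hC').2 hx)
      (q.ax4 X C hC).1)
  have hd1 : (X ∩ C) ∩ (C \ X) = ∅ := by
    ext x; simp only [mem_inter_iff, mem_diff, mem_empty_iff_false]; tauto
  have hd2 : (X' ∩ C') ∩ (C' \ X') = ∅ := by
    ext x; simp only [mem_inter_iff, mem_diff, mem_empty_iff_false]; tauto
  have hcon := q.ax5_strict (X ∩ C) (C \ X) (X' ∩ C') (C' \ X') C C' hC hC' hd1 hd2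
    hXt h2 (Or.inl ⟨hXt, hns⟩)
  rw [inter_comm X C, inter_union_diff, inter_comm X' C', inter_union_diff] at hcon
  exact hcon.2 ((q.ax3_id C C' hC hC').2)

/-- A null numerator is minimal: `N|B ⪯ ∅|B`. -/
lemma null_num (q : QCP Δ) {N B : Set Δ} (hN : QNull q.le N) (hB : ¬ QNull q.le B) :
    q.le N B ∅ B := by
  set Nt := N ∩ B with hNt
  have hNtnull : QNull q.le Nt := q.null_mono inter_subset_left hN
  have hmain : q.le Nt B ∅ B := by
    by_contra h
    have hlt : QLt q.le ∅ B Nt B := ⟨q.min_le Nt B B hB hB, h⟩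
    set M := B \ Nt with hM
    -- `B ∼ M` at `Δ`
    have hd1 : M ∩ Nt = ∅ := by
      ext x; simp only [hM, mem_inter_iff, mem_diff, mem_empty_iff_false]; tauto
    have hd2 : M ∩ (∅ : Set Δ) = ∅ := inter_empty M
    have st2 : q.le B univ M univ := by
      have := q.ax5 M Nt M ∅ univ univ q.univ_not_null q.univ_not_null hd1 hd2
        (q.refl M univ q.univ_not_null) hNtnull
      rwa [diff_union_of_subset inter_subset_right, union_empty] at this
    have st3 : ¬ QNull q.le M := fun hMn =>
      hB (q.trans B univ M univ ∅ univ q.univ_not_null q.univ_not_null q.univ_not_null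
        st2 hMn)
    -- `M|B ≺ B|B`
    have hd3 : (∅ : Set Δ) ∩ M = ∅ := empty_inter M
    have hd4 : Nt ∩ M = ∅ := by rw [inter_comm]; exact hd1
    have st4 : QLt q.le M B B B := by
      have := q.ax5_strict ∅ M Nt M B B hB hB hd3 hd4 hlt.1 (q.refl M B hB)
        (Or.inl hlt)
      rwa [empty_union, union_comm, diff_union_of_subset inter_subset_right] at this
    -- strict premise for 6b
    have st5 : QLt q.le M B M M := by
      refine ⟨q.max_le M B M hB st3, fun hx => ?_⟩
      exact st4.2 (q.trans B B M M M B hB st3 hB (q.max_le B B M hB st3) hx)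
    have st6 := q.ax6b_strict univ B M univ M M diff_subset (subset_univ B)
      (subset_refl M) (subset_univ M) q.univ_not_null hB q.univ_not_null st3
      st2 st5.1 (Or.inr st5) st3
    exact st6.2 st6.1
  exact q.trans N B Nt B ∅ B hB hB hB (q.ax4 N B hB).2 hmain

/-- A null numerator is below everything. -/
lemma null_le (q : QCP Δ) {N B X C : Set Δ} (hN : QNull q.le N) (hB : ¬ QNull q.le B)
    (hC : ¬ QNull q.le C) : q.le N B X C :=
  q.trans N B ∅ B X C hB hB hC (q.null_num hN hB) (q.min_le X B C hB hC)

/-- The incompatibility device from Axiom 6a (strict form): the two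
factorizations of `C|A` through `B` and `B'` cannot strictly cross. -/
lemma no_cross (q : QCP Δ) (A B B' C : Set Δ)
    (s1 : C ⊆ B) (s2 : B ⊆ A) (s3 : C ⊆ B') (s4 : B' ⊆ A)
    (hA : ¬ QNull q.le A) (hB : ¬ QNull q.le B) (hB' : ¬ QNull q.le B')
    (p1 : q.le B A C B') (p2 : q.le C B B' A)
    (hst : QLt q.le B A C B' ∨ QLt q.le C B B' A) : False := by
  have h := q.ax6a_strict A B C A B' C s1 s2 s3 s4 hA hB hA hB' p1 p2 hst
  exact h.2 h.1

/-- Strict transitivity: `⪯` then `≺`. -/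
lemma le_lt_trans (q : QCP Δ) {A B C D E F : Set Δ}
    (hB : ¬ QNull q.le B) (hD : ¬ QNull q.le D) (hF : ¬ QNull q.le F)
    (h1 : q.le A B C D) (h2 : QLt q.le C D E F) : QLt q.le A B E F :=
  ⟨q.trans A B C D E F hB hD hF h1 h2.1,
   fun hx => h2.2 (q.trans E F A B C D hF hB hD hx h1)⟩

/-- Strict transitivity: `≺` then `⪯`. -/
lemma lt_le_trans (q : QCP Δ) {A B C D E F : Set Δ}
    (hB : ¬ QNull q.le B) (hD : ¬ QNull q.le D) (hF : ¬ QNull q.le F)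
    (h1 : QLt q.le A B C D) (h2 : q.le C D E F) : QLt q.le A B E F :=
  ⟨q.trans A B C D E F hB hD hF h1.1 h2,
   fun hx => h1.2 (q.trans C D E F A B hD hF hB h2 hx)⟩

/-- Congruence across Axiom 4. -/
lemma le_inter_iff (q : QCP Δ) (A B C D : Set Δ)
    (hB : ¬ QNull q.le B) (hD : ¬ QNull q.le D) :
    q.le (A ∩ B) B (C ∩ D) D ↔ q.le A B C D := by
  constructor
  · intro h
    exact q.trans A B (C ∩ D) D C D hB hD hD
      (q.trans A B (A ∩ B) B (C ∩ D) D hB hB hD (q.ax4 A B hB).2 h) (q.ax4 C D hD).1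
  · intro h
    exact q.trans (A ∩ B) B C D (C ∩ D) D hB hD hD
      (q.trans (A ∩ B) B A B C D hB hB hD (q.ax4 A B hB).1 h) (q.ax4 C D hD).2

lemma lt_inter_iff (q : QCP Δ) (A B C D : Set Δ)
    (hB : ¬ QNull q.le B) (hD : ¬ QNull q.le D) :
    QLt q.le (A ∩ B) B (C ∩ D) D ↔ QLt q.le A B C D := by
  constructor
  · rintro ⟨h1, h2⟩
    exact ⟨(q.le_inter_iff A B C D hB hD).mp h1,
      fun hx => h2 ((q.le_inter_iff C D A B hD hB).mpr hx)⟩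
  · rintro ⟨h1, h2⟩
    exact ⟨(q.le_inter_iff A B C D hB hD).mpr h1,
      fun hx => h2 ((q.le_inter_iff C D A B hD hB).mp hx)⟩

end QCP

/-- for disjoint non-null `H₁`, `H₂`: `E|H₁ ⪰ E|H₂` iff
`E|H₁ ⪰ E|(H₁ ∪ H₂)`, and strictness transfers in both directions. -/
theorem qcp_favoring_union {Δ : Type*} (q : QCP Δ) (E H1 H2 : Set Δ)
    (hdisj : H1 ∩ H2 = ∅) (hH1 : ¬ QNull q.le H1) (hH2 : ¬ QNull q.le H2) :
    (q.le E H2 E H1 → q.le E (H1 ∪ H2) E H1) ∧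
    (QLt q.le E H2 E H1 → QLt q.le E (H1 ∪ H2) E H1) ∧
    (q.le E (H1 ∪ H2) E H1 → q.le E H2 E H1) ∧
    (QLt q.le E (H1 ∪ H2) E H1 → QLt q.le E H2 E H1) := by
  have hdx : ∀ x, x ∈ H1 → x ∈ H2 → False := fun x h1x h2x => by
    have : x ∈ H1 ∩ H2 := ⟨h1x, h2x⟩
    rw [hdisj] at this
    exact this
  set a1 := E ∩ H1 with ha1
  set a2 := E ∩ H2 with ha2
  have hH : ¬ QNull q.le (H1 ∪ H2) := fun h => hH1 (q.null_mono subset_union_left h)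
  have sa1 : a1 ⊆ H1 := inter_subset_right
  have sa2 : a2 ⊆ H2 := inter_subset_right
  have sH1 : H1 ⊆ H1 ∪ H2 := subset_union_left
  have sH2 : H2 ⊆ H1 ∪ H2 := subset_union_right
  have sa1D : a1 ⊆ a1 ∪ a2 := subset_union_left
  have sa2D : a2 ⊆ a1 ∪ a2 := subset_union_right
  have sDH : a1 ∪ a2 ⊆ H1 ∪ H2 := union_subset_union sa1 sa2
  have s5 : E ∩ (H1 ∪ H2) = a1 ∪ a2 := inter_union_distrib_left E H1 H2
  have s2 : (H1 ∪ H2) \ H2 = H1 := by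
    ext x
    simp only [mem_diff, mem_union]
    have := hdx x
    tauto
  have s4 : (a1 ∪ a2) \ a2 = a1 := by
    ext x
    simp only [mem_diff, mem_union, ha1, ha2, mem_inter_iff]
    have := hdx x
    tauto
  by_cases hD : QNull q.le (a1 ∪ a2)
  · -- degenerate case: `E ∩ (H1 ∪ H2)` is null
    have hn1 : QNull q.le a1 := q.null_mono sa1D hD
    have hn2 : QNull q.le a2 := q.null_mono sa2D hD
    have gz : q.le E (H1 ∪ H2) E H1 := by
      have h1 : q.le E (H1 ∪ H2) (a1 ∪ a2) (H1 ∪ H2) := by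
        have := (q.ax4 E (H1 ∪ H2) hH).2
        rwa [s5] at this
      exact q.trans E (H1 ∪ H2) (a1 ∪ a2) (H1 ∪ H2) E H1 hH hH hH1 h1
        (q.null_le hD hH hH1)
    have gy : q.le E H2 E H1 :=
      q.trans E H2 a2 H2 E H1 hH2 hH2 hH1 (q.ax4 E H2 hH2).2 (q.null_le hn2 hH2 hH1)
    have gx2 : q.le E H1 E H2 :=
      q.trans E H1 a1 H1 E H2 hH1 hH1 hH2 (q.ax4 E H1 hH1).2 (q.null_le hn1 hH1 hH2)
    have gx2' : q.le E H1 E (H1 ∪ H2) :=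
      q.trans E H1 a1 H1 E (H1 ∪ H2) hH1 hH1 hH (q.ax4 E H1 hH1).2
        (q.null_le hn1 hH1 hH)
    exact ⟨fun _ => gz, fun h => absurd gx2 h.2, fun _ => gy, fun h => absurd gx2' h.2⟩
  · -- main case: `D := a1 ∪ a2` is non-null
    -- Core incompatibility 1: `a1|H1 ⪯ D|H` and `a2|H2 ≺ D|H` are jointly impossible.
    have core1 : q.le a1 H1 (a1 ∪ a2) (H1 ∪ H2) →
        QLt q.le a2 H2 (a1 ∪ a2) (H1 ∪ H2) → False := by
      intro hxz hyz
      have hnS2 : ¬ q.le H2 (H1 ∪ H2) a2 (a1 ∪ a2) := fun hS2 =>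
        q.no_cross (H1 ∪ H2) H2 (a1 ∪ a2) a2 sa2 sH2 sa2D sDH hH hH2 hD hS2 hyz.1
          (Or.inr hyz)
      have hN2 : QLt q.le a2 (a1 ∪ a2) H2 (H1 ∪ H2) :=
        ⟨(q.total H2 (H1 ∪ H2) a2 (a1 ∪ a2) hH hD).resolve_left hnS2, hnS2⟩
      have hS : QLt q.le H1 (H1 ∪ H2) a1 (a1 ∪ a2) := by
        have := q.comp_lt hD hH hN2
        rwa [s2, s4] at this
      exact q.no_cross (H1 ∪ H2) H1 (a1 ∪ a2) a1 sa1 sH1 sa1D sDH hH hH1 hD hS.1 hxz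
        (Or.inl hS)
    -- Core incompatibility 2: `D|H ⪯ a1|H1` and `D|H ≺ a2|H2` are jointly impossible.
    have core2 : q.le (a1 ∪ a2) (H1 ∪ H2) a1 H1 →
        QLt q.le (a1 ∪ a2) (H1 ∪ H2) a2 H2 → False := by
      intro hzx hzy
      have hnN2 : ¬ q.le a2 (a1 ∪ a2) H2 (H1 ∪ H2) := fun hN2 =>
        q.no_cross (H1 ∪ H2) (a1 ∪ a2) H2 a2 sa2D sDH sa2 sH2 hH hD hH2 hzy.1 hN2
          (Or.inl hzy)
      have hS2 : QLt q.le H2 (H1 ∪ H2) a2 (a1 ∪ a2) :=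
        ⟨(q.total a2 (a1 ∪ a2) H2 (H1 ∪ H2) hD hH).resolve_left hnN2, hnN2⟩
      have hN : QLt q.le a1 (a1 ∪ a2) H1 (H1 ∪ H2) := by
        have := q.comp_lt hH hD hS2
        rwa [s2, s4] at this
      exact q.no_cross (H1 ∪ H2) (a1 ∪ a2) H1 a1 sa1D sDH sa1 sH1 hH hD hH1 hzx hN.1
        (Or.inr hN)
    -- The four statements on the intersected events.
    have P1 : q.le a2 H2 a1 H1 → q.le (a1 ∪ a2) (H1 ∪ H2) a1 H1 := by
      intro hyx
      by_contra hzx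
      have hxz : QLt q.le a1 H1 (a1 ∪ a2) (H1 ∪ H2) :=
        ⟨(q.total (a1 ∪ a2) (H1 ∪ H2) a1 H1 hH hH1).resolve_left hzx, hzx⟩
      exact core1 hxz.1 (q.le_lt_trans hH2 hH1 hH hyx hxz)
    have P2 : QLt q.le a2 H2 a1 H1 → QLt q.le (a1 ∪ a2) (H1 ∪ H2) a1 H1 := fun h =>
      ⟨P1 h.1, fun hxz => core1 hxz (q.lt_le_trans hH2 hH1 hH h hxz)⟩
    have P3 : q.le (a1 ∪ a2) (H1 ∪ H2) a1 H1 → q.le a2 H2 a1 H1 := by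
      intro hzx
      by_contra hyx
      have hxy : QLt q.le a1 H1 a2 H2 :=
        ⟨(q.total a2 H2 a1 H1 hH2 hH1).resolve_left hyx, hyx⟩
      exact core2 hzx (q.le_lt_trans hH hH1 hH2 hzx hxy)
    have P4 : QLt q.le (a1 ∪ a2) (H1 ∪ H2) a1 H1 → QLt q.le a2 H2 a1 H1 := fun h =>
      ⟨P3 h.1, fun hxy => core2 h.1 (q.lt_le_trans hH hH1 hH2 h hxy)⟩
    -- Transfer along Axiom 4.
    have iy : q.le E H2 E H1 ↔ q.le a2 H2 a1 H1 :=
      (q.le_inter_iff E H2 E H1 hH2 hH1).symm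
    have iz : q.le E (H1 ∪ H2) E H1 ↔ q.le (a1 ∪ a2) (H1 ∪ H2) a1 H1 := by
      have := (q.le_inter_iff E (H1 ∪ H2) E H1 hH hH1).symm
      rwa [s5] at this
    have ly : QLt q.le E H2 E H1 ↔ QLt q.le a2 H2 a1 H1 :=
      (q.lt_inter_iff E H2 E H1 hH2 hH1).symm
    have lz : QLt q.le E (H1 ∪ H2) E H1 ↔ QLt q.le (a1 ∪ a2) (H1 ∪ H2) a1 H1 := by
      have := (q.lt_inter_iff E (H1 ∪ H2) E H1 hH hH1).symm
      rwa [s5] at this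
    exact ⟨fun h => iz.mpr (P1 (iy.mp h)), fun h => lz.mpr (P2 (ly.mp h)),
      fun h => iy.mpr (P3 (iz.mp h)), fun h => ly.mpr (P4 (lz.mp h))⟩
end

section
/- In a qualitative conditional probability structure satisfying Axioms 1–6, conditional independence is symmetric: if A ⟂_C B (meaning A|(B∩C) ∼ A|C or B∩C is null, with C non-null), then B ⟂_C A. -/
open Set

/-- Qualitative conditional independence: `A ⟂_C B` iff `B ∩ C` is null or
`A|(B∩C) ∼ A|C`. -/
def QIndep {Δ : Type*} (le : Set Δ → Set Δ → Set Δ → Set Δ → Prop)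
    (A C B : Set Δ) : Prop :=
  QNull le (B ∩ C) ∨ QEquiv le A (B ∩ C) A C

section Aux

variable {Δ : Type*} (q : QCP Δ)

lemma qcp_equiv_symm {A B C D : Set Δ} (h : QEquiv q.le A B C D) : QEquiv q.le C D A B :=
  ⟨h.2, h.1⟩

lemma qcp_equiv_trans {A B C D E F : Set Δ} (hB : ¬ QNull q.le B) (hD : ¬ QNull q.le D)
    (hF : ¬ QNull q.le F) (h1 : QEquiv q.le A B C D) (h2 : QEquiv q.le C D E F) :
    QEquiv q.le A B E F :=
  ⟨q.trans _ _ _ _ _ _ hB hD hF h1.1 h2.1, q.trans _ _ _ _ _ _ hF hD hB h2.2 h1.2⟩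

lemma qcp_empty_min {D E : Set Δ} (hD : ¬ QNull q.le D) (hE : ¬ QNull q.le E) (X : Set Δ) :
    q.le ∅ D X E := by
  by_contra h
  have hXE : q.le X E ∅ D := (q.total X E ∅ D hE hD).resolve_right h
  have hlt := q.ax5_strict X Xᶜ ∅ univ E D hE hD (inter_compl_self X) (empty_inter univ)
      hXE (q.ax3_bound Xᶜ E D hE hD) (Or.inl ⟨hXE, h⟩)
  rw [union_compl_self, empty_union] at hlt
  exact hlt.2 (q.ax3_bound univ D E hD hE)

lemma qcp_mono_s15 {D M N : Set Δ} (hD : ¬ QNull q.le D) (h : M ⊆ N) : q.le M D N D := by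
  have h5 := q.ax5 M ∅ M (N \ M) D D hD hD (inter_empty M) (inter_diff_self M N)
      (q.refl M D hD) (qcp_empty_min q hD hD (N \ M))
  rwa [union_empty, union_diff_cancel h] at h5

lemma qcp_null_mono {M N : Set Δ} (hN : QNull q.le N) (h : M ⊆ N) : QNull q.le M :=
  q.trans M univ N univ ∅ univ q.univ_not_null q.univ_not_null q.univ_not_null
    (qcp_mono_s15 q q.univ_not_null h) hN

lemma qcp_le_top {D E : Set Δ} (hD : ¬ QNull q.le D) (hE : ¬ QNull q.le E) (X : Set Δ) :
    q.le X D E E := by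
  have h2 := q.ax4 univ E hE
  rw [univ_inter] at h2
  exact q.trans _ _ _ _ _ _ hD hE hE (q.ax3_bound X D E hD hE) h2.2

lemma qcp_null_inter {N D : Set Δ} (hN : QNull q.le N) (hD : ¬ QNull q.le D) :
    QEquiv q.le (N ∩ D) D ∅ D := by
  set M := N ∩ D with hMdef
  have hMnull : QNull q.le M := qcp_null_mono q hN inter_subset_left
  have hMD : M ⊆ D := inter_subset_right
  have hDM : ¬ QNull q.le (D \ M) := by
    intro hnull
    apply hD
    have h5 := q.ax5 M (D \ M) ∅ ∅ univ univ q.univ_not_null q.univ_not_null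
      (inter_diff_self M D) (inter_empty ∅) hMnull hnull
    rwa [union_diff_cancel hMD, union_self] at h5
  have hb : q.le D univ (D \ M) univ := by
    have h5 := q.ax5 M (D \ M) ∅ (D \ M) univ univ q.univ_not_null q.univ_not_null
      (inter_diff_self M D) (empty_inter (D \ M)) hMnull (q.refl (D \ M) univ q.univ_not_null)
    rwa [union_diff_cancel hMD, empty_union] at h5
  have hc : q.le D D (D \ M) D := by
    by_contra h'
    have hlt := q.ax6b_strict univ D (D \ M) univ D D diff_subset (subset_univ D)
      (subset_refl D) (subset_univ D) q.univ_not_null hD q.univ_not_null hD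
      (q.refl D univ q.univ_not_null) (qcp_le_top q hD hD (D \ M))
      (Or.inr ⟨qcp_le_top q hD hD (D \ M), h'⟩) hDM
    exact hlt.2 hb
  refine ⟨?_, qcp_empty_min q hD hD M⟩
  by_contra h'
  have hlt := q.ax5_strict (D \ M) ∅ (D \ M) M D D hD hD (inter_empty (D \ M))
    diff_inter_self (q.refl (D \ M) D hD) (qcp_empty_min q hD hD M)
    (Or.inr ⟨qcp_empty_min q hD hD M, h'⟩)
  rw [union_empty, diff_union_of_subset hMD] at hlt
  exact hlt.2 hc

lemma qcp_null_cond_s15 {B D : Set Δ} (hD : ¬ QNull q.le D) (hBD : QNull q.le (B ∩ D)) :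
    QEquiv q.le B D ∅ D := by
  have h1 : QEquiv q.le ((B ∩ D) ∩ D) D ∅ D := qcp_null_inter q hBD hD
  rw [inter_assoc, inter_self] at h1
  exact qcp_equiv_trans q hD hD hD (qcp_equiv_symm q (q.ax4 B D hD)) h1

end Aux

/-- qualitative conditional independence is symmetric. -/
theorem qcp_indep_symm {Δ : Type*} (q : QCP Δ) (A B C : Set Δ)
    (hC : ¬ QNull q.le C) (h : QIndep q.le A C B) : QIndep q.le B C A := by
  by_cases hAC : QNull q.le (A ∩ C)
  · exact Or.inl hAC
  right
  by_cases hBC : QNull q.le (B ∩ C)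
  · -- B ∩ C null : both sides are null-conditionals
    have hN : QNull q.le (B ∩ (A ∩ C)) :=
      qcp_null_mono q hBC (fun x hx => ⟨hx.1, hx.2.2⟩)
    have h1 : QEquiv q.le B (A ∩ C) ∅ (A ∩ C) := qcp_null_cond_s15 q hAC hN
    have h2 : QEquiv q.le ∅ (A ∩ C) ∅ C :=
      ⟨qcp_empty_min q hAC hC ∅, qcp_empty_min q hC hAC ∅⟩
    have h3 : QEquiv q.le ∅ C B C := qcp_equiv_symm q (qcp_null_cond_s15 q hC hBC)
    exact qcp_equiv_trans q hAC hC hC (qcp_equiv_trans q hAC hAC hC h1 h2) h3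
  · have hEq : QEquiv q.le A (B ∩ C) A C := h.resolve_left hBC
    set J : Set Δ := B ∩ (A ∩ C) with hJdef
    have hJBC : J ⊆ B ∩ C := fun x hx => ⟨hx.1, hx.2.2⟩
    -- J | (B∩C) ∼ (A∩C) | C
    have e1 : QEquiv q.le J (B ∩ C) A (B ∩ C) := by
      have := q.ax4 A (B ∩ C) hBC
      rwa [inter_left_comm] at this
    have e2 : QEquiv q.le A C (A ∩ C) C := qcp_equiv_symm q (q.ax4 A C hC)
    have hJ : QEquiv q.le J (B ∩ C) (A ∩ C) C :=
      qcp_equiv_trans q hBC hC hC (qcp_equiv_trans q hBC hBC hC e1 hEq) e2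
    -- core : J | (A∩C) ∼ (B∩C) | C
    have core : QEquiv q.le J (A ∩ C) (B ∩ C) C := by
      constructor
      · by_contra h1
        have hlt : QLt q.le (B ∩ C) C J (A ∩ C) :=
          ⟨(q.total J (A ∩ C) (B ∩ C) C hAC hC).resolve_left h1, h1⟩
        have habs := q.ax6a_strict C (B ∩ C) J C (A ∩ C) J hJBC inter_subset_right
          inter_subset_right inter_subset_right hC hBC hC hAC hlt.1 hJ.1 (Or.inl hlt)
        exact habs.2 habs.1
      · by_contra h2
        have hlt : QLt q.le J (A ∩ C) (B ∩ C) C :=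
          ⟨(q.total J (A ∩ C) (B ∩ C) C hAC hC).resolve_right h2, h2⟩
        have habs := q.ax6a_strict C (A ∩ C) J C (B ∩ C) J inter_subset_right
          inter_subset_right hJBC inter_subset_right hC hAC hC hBC hJ.2 hlt.1 (Or.inr hlt)
        exact habs.2 habs.1
    have f1 : QEquiv q.le B (A ∩ C) J (A ∩ C) := qcp_equiv_symm q (q.ax4 B (A ∩ C) hAC)
    have f2 : QEquiv q.le (B ∩ C) C B C := q.ax4 B C hC
    exact qcp_equiv_trans q hAC hC hC (qcp_equiv_trans q hAC hAC hC f1 core) f2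
end

section
/- In a qualitative conditional probability structure satisfying Axioms 1–6, suppose A ⟂_C B (A and B conditionally independent given non-null C) and ∅|C ≺ B|C. Then (A∩B)|C ∼ ∅|C if and only if A|C ∼ ∅|C. -/
open Set

/-- `∅|X ⪯ A|Y` for non-null `X`, `Y`. -/
lemma q_empty_le {Δ : Type*} (q : QCP Δ) (A X Y : Set Δ)
    (hX : ¬ QNull q.le X) (hY : ¬ QNull q.le Y) : q.le ∅ X A Y := by
  by_contra h
  have hlt : QLt q.le A Y ∅ X :=
    ⟨(q.total A Y ∅ X hY hX).resolve_right h, h⟩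
  have := q.ax5_strict A Aᶜ ∅ univ Y X hY hX (by simp) (by simp)
    hlt.1 (q.ax3_bound Aᶜ Y X hY hX) (Or.inl hlt)
  rw [Set.union_compl_self, Set.empty_union] at this
  exact this.2 (q.ax3_bound univ X Y hX hY)

/-- Monotonicity: `D ⊆ E → D|C ⪯ E|C`. -/
lemma q_mono {Δ : Type*} (q : QCP Δ) {C D E : Set Δ}
    (hC : ¬ QNull q.le C) (h : D ⊆ E) : q.le D C E C := by
  have := q.ax5 D ∅ D (E \ D) C C hC hC (by simp) (by simp [Set.disjoint_sdiff_right.inter_eq])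
    (q.refl D C hC) (q_empty_le q (E \ D) C C hC hC)
  rwa [Set.union_empty, Set.union_diff_cancel h] at this

/-- If `D ⊆ C` is null and `C` is non-null, then `D|C ⪯ ∅|C`. -/
lemma q_null_sub {Δ : Type*} (q : QCP Δ) {C D : Set Δ}
    (hC : ¬ QNull q.le C) (hD : QNull q.le D) (hsub : D ⊆ C) :
    q.le D C ∅ C := by
  set E := C \ D with hE
  have hdisj : E ∩ D = ∅ := by simp [hE, Set.disjoint_sdiff_left.inter_eq]
  have hCE : q.le C univ E univ := by
    have := q.ax5 E D E ∅ univ univ q.univ_not_null q.univ_not_null hdisj (by simp)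
      (q.refl E univ q.univ_not_null) hD
    rwa [Set.diff_union_of_subset hsub, Set.union_empty] at this
  have hEnn : ¬ QNull q.le E := fun hn =>
    hC (q.trans C univ E univ ∅ univ q.univ_not_null q.univ_not_null q.univ_not_null hCE hn)
  by_contra h
  have hlt : QLt q.le ∅ C D C := ⟨q_empty_le q D C C hC hC, h⟩
  have h1 : QLt q.le E C C C := by
    have := q.ax5_strict E ∅ E D C C hC hC (by simp) hdisj
      (q.refl E C hC) hlt.1 (Or.inr hlt)
    rwa [Set.union_empty, Set.diff_union_of_subset hsub] at this
  have h2 := q.ax6b_strict univ C E univ C C (Set.diff_subset) (Set.subset_univ C)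
    (subset_rfl) (Set.subset_univ C) q.univ_not_null hC q.univ_not_null hC
    (q.refl C univ q.univ_not_null) h1.1 (Or.inr h1) hEnn
  exact h2.2 hCE

/-- If `A ∩ C` is null and `C` is non-null, then `A|C ⪯ ∅|C`. -/
lemma q_null_inter {Δ : Type*} (q : QCP Δ) {A C : Set Δ}
    (hC : ¬ QNull q.le C) (h : QNull q.le (A ∩ C)) : q.le A C ∅ C :=
  q.trans A C (A ∩ C) C ∅ C hC hC hC ((q.ax4 A C hC).2)
    (q_null_sub q hC h Set.inter_subset_right)

/-- if `A ⟂_C B` and `∅|C ≺ B|C`, then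
`(A∩B)|C ∼ ∅|C` iff `A|C ∼ ∅|C`. -/
theorem qcp_indep_null_iff {Δ : Type*} (q : QCP Δ) (A B C : Set Δ)
    (hC : ¬ QNull q.le C) (hind : QIndep q.le A C B)
    (hB : QLt q.le ∅ C B C) :
    (QEquiv q.le (A ∩ B) C ∅ C ↔ QEquiv q.le A C ∅ C) := by
  constructor
  · intro hAB
    refine ⟨?_, q_empty_le q A C C hC hC⟩
    by_contra h
    have hACnn : ¬ QNull q.le (A ∩ C) := fun hn => h (q_null_inter q hC hn)
    have hBCnn : ¬ QNull q.le (B ∩ C) := fun hn => hB.2 (q_null_inter q hC hn)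
    have hindeq : QEquiv q.le A (B ∩ C) A C := hind.resolve_left hBCnn
    -- hypothesis 1 : (A∩C)|C ⪯ (A∩(B∩C))|(B∩C)
    have hyp1 : q.le (A ∩ C) C (A ∩ (B ∩ C)) (B ∩ C) := by
      have h1 : q.le (A ∩ C) C A C := (q.ax4 A C hC).1
      have h2 : q.le A C A (B ∩ C) := hindeq.2
      have h3 : q.le A (B ∩ C) (A ∩ (B ∩ C)) (B ∩ C) := (q.ax4 A (B ∩ C) hBCnn).2
      exact q.trans _ _ _ _ _ _ hC hBCnn hBCnn
        (q.trans _ _ _ _ _ _ hC hC hBCnn h1 h2) h3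
    -- hypothesis 2, strict : ∅|(A∩C) ≺ (B∩C)|C
    have hyp2 : QLt q.le ∅ (A ∩ C) (B ∩ C) C := by
      refine ⟨q_empty_le q (B ∩ C) (A ∩ C) C hACnn hC, fun hcon => ?_⟩
      have hBC0 : q.le B C ∅ C := by
        have h1 : q.le B C (B ∩ C) C := (q.ax4 B C hC).2
        have h2 : q.le ∅ (A ∩ C) ∅ C := q_empty_le q ∅ (A ∩ C) C hACnn hC
        exact q.trans _ _ _ _ _ _ hC hACnn hC
          (q.trans _ _ _ _ _ _ hC hC hACnn h1 hcon) h2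
      exact hB.2 hBC0
    have h6 := q.ax6a_strict C (A ∩ C) ∅ C (B ∩ C) (A ∩ (B ∩ C))
      (Set.empty_subset _) Set.inter_subset_right
      Set.inter_subset_right Set.inter_subset_right
      hC hACnn hC hBCnn hyp1 hyp2.1 (Or.inr hyp2)
    -- contradiction with (A∩B)|C ⪯ ∅|C
    have hfin : q.le (A ∩ (B ∩ C)) C ∅ C := by
      have h1 : q.le (A ∩ B ∩ C) C (A ∩ B) C := (q.ax4 (A ∩ B) C hC).1
      rw [Set.inter_assoc] at h1
      exact q.trans _ _ _ _ _ _ hC hC hC h1 hAB.1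
    exact h6.2 hfin
  · intro hA
    refine ⟨?_, q_empty_le q (A ∩ B) C C hC hC⟩
    exact q.trans _ _ _ _ _ _ hC hC hC
      (q_mono q hC (Set.inter_subset_left : A ∩ B ⊆ A)) hA.1
end

section
/- In a qualitative conditional probability structure satisfying Axioms 1–6, let B₁, …, B_n partition G and suppose A|B_i ∼ C_i|B_i for all i ≤ n (each B_i non-null). If A ∩ G is non-null, then for every i ≤ n: B_i | (A ∩ G) ∼ (B_i ∩ C_i) | ⋃_{j≤n} (B_j ∩ C_j). -/
open Set

section Helpers

variable {Δ : Type*} (q : QCP Δ)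

lemma qcp_min_le {X Y : Set Δ} (hX : ¬ QNull q.le X) (hY : ¬ QNull q.le Y)
    (E : Set Δ) : q.le ∅ X E Y := by
  by_contra h
  have htot := (q.total ∅ X E Y hX hY).resolve_left h
  have h4 := q.ax4 E Y hY
  have h1 : q.le (Y ∩ E) Y ∅ X := by
    rw [inter_comm]
    exact q.trans (E ∩ Y) Y E Y ∅ X hY hY hX h4.1 htot
  have h1s : ¬ q.le ∅ X (Y ∩ E) Y := by
    intro hc
    apply h
    rw [inter_comm] at hc
    exact q.trans ∅ X (E ∩ Y) Y E Y hX hY hY hc h4.1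
  have h2 : q.le (Y \ E) Y X X := by
    have hb := q.ax3_bound (Y \ E) Y X hY hX
    have h4x := q.ax4 univ X hX
    rw [univ_inter] at h4x
    exact q.trans (Y \ E) Y univ X X X hY hX hX hb h4x.2
  have hd1 : (Y ∩ E) ∩ (Y \ E) = ∅ := by
    ext x
    simp only [mem_inter_iff, mem_diff, mem_empty_iff_false, iff_false]
    tauto
  have hstrict := q.ax5_strict (Y ∩ E) (Y \ E) ∅ X Y X hY hX hd1 (empty_inter X)
    h1 h2 (Or.inl ⟨h1, h1s⟩)
  rw [inter_union_diff, empty_union] at hstrict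
  exact hstrict.2 (q.ax3_id X Y hX hY).1

lemma qcp_empty_equiv {X Y : Set Δ} (hX : ¬ QNull q.le X) (hY : ¬ QNull q.le Y) :
    QEquiv q.le ∅ X ∅ Y :=
  ⟨qcp_min_le q hX hY ∅, qcp_min_le q hY hX ∅⟩

lemma qcp_mono_s17 {X S T : Set Δ} (hX : ¬ QNull q.le X) (hST : S ⊆ T) :
    q.le S X T X := by
  have h := q.ax5 S ∅ S (T \ S) X X hX hX (inter_empty S)
    (inter_diff_self S T) (q.refl S X hX) (qcp_min_le q hX hX (T \ S))
  rwa [union_empty, union_diff_cancel hST] at h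

lemma qcp_null_mono_s17 {E S : Set Δ} (hE : QNull q.le E) (hSE : S ⊆ E) :
    QNull q.le S :=
  q.trans S univ E univ ∅ univ q.univ_not_null q.univ_not_null q.univ_not_null
    (qcp_mono_s17 q q.univ_not_null hSE) hE

/-- If `N` is null and `N ⊆ F` with `F` non-null, then `N|F ∼ ∅|F`. -/
lemma qcp_null_cond_s17 {N F : Set Δ} (hN : QNull q.le N) (hNF : N ⊆ F)
    (hF : ¬ QNull q.le F) : QEquiv q.le N F ∅ F := by
  have un := q.univ_not_null
  refine ⟨?_, qcp_min_le q hF hF N⟩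
  by_contra h
  have hlt : QLt q.le ∅ F N F := ⟨(q.total N F ∅ F hF hF).resolve_left h, h⟩
  have hFN : ¬ QNull q.le (F \ N) := by
    intro h0
    apply hF
    have := q.ax5 (F \ N) N ∅ ∅ univ univ un un diff_inter_self
      (inter_empty ∅) h0 hN
    rwa [diff_union_of_subset hNF, union_empty] at this
  have hstep := q.ax5_strict (F \ N) ∅ (F \ N) N F F hF hF (inter_empty (F \ N))
    diff_inter_self (q.refl (F \ N) F hF) hlt.1 (Or.inr hlt)
  rw [union_empty, diff_union_of_subset hNF] at hstep
  have h6 := q.ax6b_strict univ F (F \ N) univ F F diff_subset (subset_univ F)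
    (subset_refl F) (subset_univ F) un hF un hF (q.refl F univ un) hstep.1
    (Or.inr hstep) hFN
  apply h6.2
  have := q.ax5 (F \ N) N (F \ N) ∅ univ univ un un
    diff_inter_self (inter_empty (F \ N)) (q.refl (F \ N) univ un) hN
  rwa [diff_union_of_subset hNF, union_empty] at this

/-- Finite disjoint additivity for `⪯` over `univ`. -/
lemma qcp_union_le {n : ℕ} (E F : Fin n → Set Δ)
    (hE : ∀ i j, i ≠ j → E i ∩ E j = ∅) (hF : ∀ i j, i ≠ j → F i ∩ F j = ∅)
    (h : ∀ i, q.le (E i) univ (F i) univ) :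
    q.le (⋃ i, E i) univ (⋃ i, F i) univ := by
  have un := q.univ_not_null
  have key : ∀ s : Finset (Fin n),
      q.le (⋃ i ∈ s, E i) univ (⋃ i ∈ s, F i) univ := by
    intro s
    induction s using Finset.induction_on with
    | empty => simpa using q.refl ∅ univ un
    | @insert a s ha ih =>
      rw [Finset.set_biUnion_insert, Finset.set_biUnion_insert]
      have hdE : E a ∩ ⋃ i ∈ s, E i = ∅ := by
        ext x
        simp only [mem_inter_iff, mem_iUnion, exists_prop, mem_empty_iff_false,
          iff_false, not_and]
        rintro hxa ⟨i, his, hxi⟩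
        have hne : a ≠ i := fun hai => ha (hai ▸ his)
        have : x ∈ (∅ : Set Δ) := hE a i hne ▸ (⟨hxa, hxi⟩ : x ∈ E a ∩ E i)
        exact this
      have hdF : F a ∩ ⋃ i ∈ s, F i = ∅ := by
        ext x
        simp only [mem_inter_iff, mem_iUnion, exists_prop, mem_empty_iff_false,
          iff_false, not_and]
        rintro hxa ⟨i, his, hxi⟩
        have hne : a ≠ i := fun hai => ha (hai ▸ his)
        have : x ∈ (∅ : Set Δ) := hF a i hne ▸ (⟨hxa, hxi⟩ : x ∈ F a ∩ F i)
        exact this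
      exact q.ax5 (E a) (⋃ i ∈ s, E i) (F a) (⋃ i ∈ s, F i) univ univ un un
        hdE hdF (h a) ih
  have := key Finset.univ
  simpa using this

end Helpers

/-- qualitative Bayes' theorem / law of total probability.  If
`B 1, …, B n` partition `G`, each `B i` is non-null, `A|B i ∼ C i|B i` for all `i`,
and `A ∩ G` is non-null, then `B i|(A ∩ G) ∼ (B i ∩ C i)|⋃ j (B j ∩ C j)`. -/


theorem qcp_bayes_ltp {Δ : Type*} (q : QCP Δ) (n : ℕ) (B C : Fin n → Set Δ)
    (G A : Set Δ)
    (hpart : (⋃ i, B i) = G)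
    (hdisj : ∀ i j, i ≠ j → B i ∩ B j = ∅)
    (hBnn : ∀ i, ¬ QNull q.le (B i))
    (hlik : ∀ i, QEquiv q.le A (B i) (C i) (B i))
    (hAG : ¬ QNull q.le (A ∩ G)) :
    ∀ i, QEquiv q.le (B i) (A ∩ G) (B i ∩ C i) (⋃ j, B j ∩ C j) := by

  have un := q.univ_not_null
  set X : Set Δ := A ∩ G with hXdef
  set D : Set Δ := ⋃ j, B j ∩ C j with hDdef
  set E : Fin n → Set Δ := fun i => A ∩ B i with hEdef
  set F : Fin n → Set Δ := fun i => B i ∩ C i with hFdef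
  have hBsub : ∀ i, B i ⊆ G := fun i => hpart ▸ subset_iUnion B i
  have hEX : ∀ i, E i ⊆ X := fun i =>
    inter_subset_inter (subset_refl A) (hBsub i)
  have hFD : ∀ i, F i ⊆ D := fun i => subset_iUnion F i
  have hXE : X = ⋃ i, E i := by
    rw [hXdef, ← hpart, inter_iUnion]
  -- Step 1: E i | Δ ∼ F i | Δ
  have step1 : ∀ i, QEquiv q.le (E i) univ (F i) univ := by
    intro i
    have hb := hBnn i
    have h4a := q.ax4 A (B i) hb
    have h4c := q.ax4 (C i) (B i) hb
    have hEFB : QEquiv q.le (E i) (B i) (F i) (B i) := by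
      constructor
      · refine q.trans (E i) (B i) A (B i) (F i) (B i) hb hb hb h4a.1 ?_
        refine q.trans A (B i) (C i) (B i) (F i) (B i) hb hb hb (hlik i).1 ?_
        rw [hFdef]
        simp only
        rw [inter_comm (B i) (C i)]
        exact h4c.2
      · have h1 : q.le (F i) (B i) (C i) (B i) := by
          rw [hFdef]; simp only; rw [inter_comm (B i) (C i)]; exact h4c.1
        refine q.trans (F i) (B i) (C i) (B i) (E i) (B i) hb hb hb h1 ?_
        exact q.trans (C i) (B i) A (B i) (E i) (B i) hb hb hb (hlik i).2 h4a.2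
    have hsubE : E i ⊆ B i := inter_subset_right
    have hsubF : F i ⊆ B i := inter_subset_left
    constructor
    · exact q.ax6b univ (B i) (E i) univ (B i) (F i) hsubE (subset_univ _)
        hsubF (subset_univ _) un hb un hb (q.refl (B i) univ un) hEFB.1
    · exact q.ax6b univ (B i) (F i) univ (B i) (E i) hsubF (subset_univ _)
        hsubE (subset_univ _) un hb un hb (q.refl (B i) univ un) hEFB.2
  -- disjointness of the families
  have hEdisj : ∀ i j, i ≠ j → E i ∩ E j = ∅ := by
    intro i j hij
    apply eq_empty_of_subset_empty
    intro x hx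
    exact (hdisj i j hij) ▸ (⟨hx.1.2, hx.2.2⟩ : x ∈ B i ∩ B j)
  have hFdisj : ∀ i j, i ≠ j → F i ∩ F j = ∅ := by
    intro i j hij
    apply eq_empty_of_subset_empty
    intro x hx
    exact (hdisj i j hij) ▸ (⟨hx.1.1, hx.2.1⟩ : x ∈ B i ∩ B j)
  -- Step 2: X | Δ ∼ D | Δ
  have step2 : QEquiv q.le X univ D univ := by
    constructor
    · rw [hXE]
      exact qcp_union_le q E F hEdisj hFdisj (fun i => (step1 i).1)
    · rw [hXE]
      exact qcp_union_le q F E hFdisj hEdisj (fun i => (step1 i).2)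
  have hDnn : ¬ QNull q.le D := by
    intro h
    exact hAG (q.trans X univ D univ ∅ univ un un un step2.1 h)
  -- Main step: E i | X ∼ F i | D
  have main : ∀ i, QEquiv q.le (E i) X (F i) D := by
    intro i
    by_cases hEn : QNull q.le (E i)
    · have hFn : QNull q.le (F i) :=
        q.trans (F i) univ (E i) univ ∅ univ un un un (step1 i).2 hEn
      have h1 := qcp_null_cond_s17 q hEn (hEX i) hAG
      have h2 := qcp_null_cond_s17 q hFn (hFD i) hDnn
      have h3 := qcp_empty_equiv q hAG hDnn
      constructor
      · exact q.trans (E i) X ∅ X (F i) D hAG hAG hDnn h1.1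
          (q.trans ∅ X ∅ D (F i) D hAG hDnn hDnn h3.1 h2.2)
      · exact q.trans (F i) D ∅ D (E i) X hDnn hDnn hAG h2.1
          (q.trans ∅ D ∅ X (E i) X hDnn hAG hAG h3.2 h1.2)
    · have hFn : ¬ QNull q.le (F i) := by
        intro h
        exact hEn (q.trans (E i) univ (F i) univ ∅ univ un un un (step1 i).1 h)
      constructor
      · by_contra hc
        have hlt : QLt q.le (F i) D (E i) X :=
          ⟨(q.total (E i) X (F i) D hAG hDnn).resolve_left hc, hc⟩
        have h6 := q.ax6b_strict univ D (F i) univ X (E i) (hFD i)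
          (subset_univ D) (hEX i) (subset_univ X) un hDnn un hAG
          step2.2 hlt.1 (Or.inr hlt) hFn
        exact h6.2 (step1 i).1
      · by_contra hc
        have hlt : QLt q.le (E i) X (F i) D :=
          ⟨(q.total (F i) D (E i) X hDnn hAG).resolve_left hc, hc⟩
        have h6 := q.ax6b_strict univ X (E i) univ D (F i) (hEX i)
          (subset_univ X) (hFD i) (subset_univ D) un hAG un hDnn
          step2.1 hlt.1 (Or.inr hlt) hEn
        exact h6.2 (step1 i).2
  -- conclude
  intro i
  have hBX : B i ∩ X = E i := by
    ext x
    constructor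
    · rintro ⟨h1, h2, _⟩; exact ⟨h2, h1⟩
    · rintro ⟨h1, h2⟩; exact ⟨h2, h1, hBsub i h2⟩
  have h4 := q.ax4 (B i) X hAG
  rw [hBX] at h4
  constructor
  · exact q.trans (B i) X (E i) X (F i) D hAG hAG hDnn h4.2 (main i).1
  · exact q.trans (F i) D (E i) X (B i) X hDnn hAG hAG (main i).2 h4.1
end

section
/- In a qualitative conditional probability structure satisfying Axioms 1–6, let B₁, …, B_n partition G, suppose A ∩ B_i is non-null for all i, A ⟂_{B_i} C_i for each i, and C_i|B_i ∼ C_j|B_j for all i, j ≤ n. Then for every k ≤ n: (⋃_{i≤n} C_i ∩ B_i) | (A ∩ G) ∼ C_k | B_k. -/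
open Set

namespace QCPAux

variable {Δ : Type*} (q : QCP Δ)

/-- Everything is `⪯ B|B`. -/
lemma top_ge {X Y B : Set Δ} (hY : ¬ QNull q.le Y) (hB : ¬ QNull q.le B) :
    q.le X Y B B := by
  have h1 : q.le X Y univ B := q.ax3_bound X Y B hY hB
  have h2 : QEquiv q.le (univ ∩ B) B univ B := q.ax4 univ B hB
  rw [univ_inter] at h2
  exact q.trans X Y univ B B B hY hB hB h1 h2.2

/-- `∅|B` is below everything. -/
lemma bot_le {X B C : Set Δ} (hB : ¬ QNull q.le B) (hC : ¬ QNull q.le C) :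
    q.le ∅ B X C := by
  by_contra h
  have h1 : q.le X C ∅ B := by
    rcases q.total ∅ B X C hB hC with h' | h'
    · exact absurd h' h
    · exact h'
  have h2 : q.le (C \ X) C B B := top_ge q hC hB
  have h3 := q.ax5_strict X (C \ X) ∅ B C B hC hB (by simp)
    (by simp) h1 h2 (Or.inl ⟨h1, h⟩)
  rw [empty_union] at h3
  apply h3.2
  have e1 : QEquiv q.le ((X ∪ C \ X) ∩ C) C (X ∪ C \ X) C := q.ax4 _ C hC
  have e2 : (X ∪ C \ X) ∩ C = C := by
    apply inter_eq_right.2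
    intro x hx
    by_cases hxX : x ∈ X
    · exact Or.inl hxX
    · exact Or.inr ⟨hx, hxX⟩
  rw [e2] at e1
  have h4 : q.le B B C C := (q.ax3_id C B hC hB).2
  exact q.trans B B C C (X ∪ C \ X) C hB hC hC h4 e1.1

lemma le_mono {A A' B : Set Δ} (hAA : A ⊆ A') (hB : ¬ QNull q.le B) :
    q.le A B A' B := by
  have h := q.ax5 A ∅ A (A' \ A) B B hB hB (by simp) (by simp)
    (q.refl A B hB) (bot_le q hB hB)
  rwa [union_empty, union_diff_cancel hAA] at h

lemma null_mono {N M : Set Δ} (hNM : N ⊆ M) (hM : QNull q.le M) : QNull q.le N :=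
  q.trans N univ M univ ∅ univ q.univ_not_null q.univ_not_null q.univ_not_null
    (le_mono q hNM q.univ_not_null) hM

lemma nn_superset {M M' : Set Δ} (hMM : M ⊆ M') (hM : ¬ QNull q.le M) :
    ¬ QNull q.le M' := fun h => hM (null_mono q hMM h)

lemma null_union {M N : Set Δ} (hM : QNull q.le M) (hN : QNull q.le N) :
    QNull q.le (M ∪ N) := by
  have h := q.ax5 M (N \ M) ∅ ∅ univ univ q.univ_not_null q.univ_not_null
    (by simp) (by simp) hM (null_mono q diff_subset hN)
  rwa [union_diff_self, union_empty] at h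

lemma eqv_symm {a b c d : Set Δ} (h : QEquiv q.le a b c d) : QEquiv q.le c d a b :=
  ⟨h.2, h.1⟩

lemma eqv_refl {a b : Set Δ} (hb : ¬ QNull q.le b) : QEquiv q.le a b a b :=
  ⟨q.refl a b hb, q.refl a b hb⟩

lemma eqv_trans {a b c d e f : Set Δ} (hb : ¬ QNull q.le b) (hd : ¬ QNull q.le d)
    (hf : ¬ QNull q.le f) (h1 : QEquiv q.le a b c d) (h2 : QEquiv q.le c d e f) :
    QEquiv q.le a b e f :=
  ⟨q.trans a b c d e f hb hd hf h1.1 h2.1, q.trans e f c d a b hf hd hb h2.2 h1.2⟩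

lemma lt_of_lt_eqv {a b c d e f : Set Δ} (hb : ¬ QNull q.le b) (hd : ¬ QNull q.le d)
    (hf : ¬ QNull q.le f) (h1 : QLt q.le a b c d) (h2 : QEquiv q.le c d e f) :
    QLt q.le a b e f := by
  refine ⟨q.trans a b c d e f hb hd hf h1.1 h2.1, fun h => h1.2 ?_⟩
  exact q.trans c d e f a b hd hf hb h2.1 h

lemma eqv_of_not_lt {a b c d : Set Δ} (hb : ¬ QNull q.le b) (hd : ¬ QNull q.le d)
    (h1 : ¬ QLt q.le a b c d) (h2 : ¬ QLt q.le c d a b) : QEquiv q.le a b c d := by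
  rcases q.total a b c d hb hd with h | h
  · refine ⟨h, ?_⟩
    by_contra h'
    exact h1 ⟨h, h'⟩
  · refine ⟨?_, h⟩
    by_contra h'
    exact h2 ⟨h, h'⟩

lemma lt_of_eqv_lt {a b c d e f : Set Δ} (hb : ¬ QNull q.le b) (hd : ¬ QNull q.le d)
    (hf : ¬ QNull q.le f) (h1 : QEquiv q.le a b c d) (h2 : QLt q.le c d e f) :
    QLt q.le a b e f := by
  refine ⟨q.trans a b c d e f hb hd hf h1.1 h2.1, fun h => h2.2 ?_⟩
  exact q.trans e f a b c d hf hb hd h h1.1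

lemma empty_eqv {D D' : Set Δ} (hD : ¬ QNull q.le D) (hD' : ¬ QNull q.le D') :
    QEquiv q.le ∅ D ∅ D' := ⟨bot_le q hD hD', bot_le q hD' hD⟩

/-- A null event is conditionally equivalent to `∅` given any non-null event. -/
lemma null_cond {N D : Set Δ} (hN : QNull q.le N) (hD : ¬ QNull q.le D) :
    QEquiv q.le N D ∅ D := by
  refine ⟨?_, bot_le q hD hD⟩
  have hND : QNull q.le (N ∩ D) := null_mono q inter_subset_left hN
  have h4 : QEquiv q.le (N ∩ D) D N D := q.ax4 N D hD
  suffices h : q.le (N ∩ D) D ∅ D by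
    exact q.trans N D (N ∩ D) D ∅ D hD hD hD h4.2 h
  by_contra hcon
  have hlt : QLt q.le ∅ D (N ∩ D) D := ⟨bot_le q hD hD, hcon⟩
  set E := D \ (N ∩ D) with hEdef
  have hED : E ⊆ D := diff_subset
  have hEunion : E ∪ N ∩ D = D := by
    rw [hEdef, diff_union_self, union_eq_left]
    exact inter_subset_right
  have hE : ¬ QNull q.le E := by
    intro h
    apply hD
    rw [← hEunion]
    exact null_union q h hND
  -- step a : E|D ≺ D|D
  have ha := q.ax5_strict E ∅ E (N ∩ D) D D hD hD (by simp)
    (by rw [hEdef]; exact diff_inter_self)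
    (q.refl E D hD) (bot_le q hD hD) (Or.inr hlt)
  rw [union_empty, hEunion] at ha
  -- step b : D|univ ⪯ E|univ
  have hb := q.ax5 E (N ∩ D) E ∅ univ univ q.univ_not_null q.univ_not_null
    (by rw [hEdef]; exact diff_inter_self)
    (by simp) (q.refl E univ q.univ_not_null) hND
  rw [union_empty, hEunion] at hb
  -- step c : contradiction via ax6b_strict
  have htop : q.le E D E E := top_ge q hD hE
  have hstrict : QLt q.le E D E E := by
    refine ⟨htop, fun hc => ha.2 ?_⟩
    have h1 : q.le D D E E := (q.ax3_id E D hE hD).2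
    exact q.trans D D E E E D hD hE hD h1 hc
  have hc := q.ax6b_strict univ D E univ E E hED (subset_univ D) subset_rfl
    (subset_univ E) q.univ_not_null hD q.univ_not_null hE hb htop
    (Or.inr hstrict) hE
  exact hc.2 (q.refl E univ q.univ_not_null)

/-- Independence transfer: if `A|(C∩B) ∼ A|B` then `(A∩(C∩B))|(A∩B) ∼ (C∩B)|B`. -/
lemma indep_transfer {A B C : Set Δ} (hB : ¬ QNull q.le B)
    (hAB : ¬ QNull q.le (A ∩ B)) (hCB : ¬ QNull q.le (C ∩ B))
    (heq : QEquiv q.le A (C ∩ B) A B) :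
    QEquiv q.le (A ∩ (C ∩ B)) (A ∩ B) (C ∩ B) B := by
  set X := A ∩ (C ∩ B) with hX
  have hXsub1 : X ⊆ A ∩ B := inter_subset_inter_right A inter_subset_right
  have hXsub2 : X ⊆ C ∩ B := inter_subset_right
  have e0 : QEquiv q.le X (C ∩ B) A (C ∩ B) := q.ax4 A (C ∩ B) hCB
  have e0' : QEquiv q.le (A ∩ B) B A B := q.ax4 A B hB
  have e1 : QEquiv q.le X (C ∩ B) (A ∩ B) B :=
    eqv_trans q hCB hCB hB e0 (eqv_trans q hCB hB hB heq (eqv_symm q e0'))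
  have h1 : ¬ QLt q.le X (A ∩ B) (C ∩ B) B := by
    intro h
    have hc := q.ax6a_strict B (A ∩ B) X B (C ∩ B) X hXsub1 inter_subset_right
      hXsub2 inter_subset_right hB hAB hB hCB e1.2 h.1 (Or.inr h)
    exact hc.2 (q.refl X B hB)
  have h2 : ¬ QLt q.le (C ∩ B) B X (A ∩ B) := by
    intro h
    have hc := q.ax6a_strict B (C ∩ B) X B (A ∩ B) X hXsub2 inter_subset_right
      hXsub1 inter_subset_right hB hCB hB hAB h.1 e1.1 (Or.inl h)
    exact hc.2 (q.refl X B hB)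
  exact eqv_of_not_lt q hAB hB h1 h2

/-- The key per-piece equivalence, both in the null and non-null case. -/
lemma piece {A B C : Set Δ} (hB : ¬ QNull q.le B) (hAB : ¬ QNull q.le (A ∩ B))
    (hind : QIndep q.le A B C) :
    QEquiv q.le (A ∩ (C ∩ B)) (A ∩ B) C B := by
  have e4 : QEquiv q.le (C ∩ B) B C B := q.ax4 C B hB
  by_cases hCB : QNull q.le (C ∩ B)
  · have hXnull : QNull q.le (A ∩ (C ∩ B)) := null_mono q inter_subset_right hCB
    have h1 : QEquiv q.le (A ∩ (C ∩ B)) (A ∩ B) ∅ (A ∩ B) := null_cond q hXnull hAB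
    have h2 : QEquiv q.le ∅ (A ∩ B) ∅ B := empty_eqv q hAB hB
    have h3 : QEquiv q.le ∅ B (C ∩ B) B := eqv_symm q (null_cond q hCB hB)
    exact eqv_trans q hAB hAB hB h1 (eqv_trans q hAB hB hB h2
      (eqv_trans q hB hB hB h3 e4))
  · rcases hind with h | h
    · exact absurd h hCB
    · exact eqv_trans q hAB hB hB (indep_transfer q hB hAB hCB h) e4

/-- Union lemma: equal conditional pieces over disjoint bases combine. -/
lemma union_two {X₁ X₂ D₁ D₂ : Set Δ} (hdisj : D₁ ∩ D₂ = ∅)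
    (hX1 : X₁ ⊆ D₁) (hX2 : X₂ ⊆ D₂)
    (hD1 : ¬ QNull q.le D₁) (hD2 : ¬ QNull q.le D₂)
    (he : QEquiv q.le X₁ D₁ X₂ D₂) :
    QEquiv q.le (X₁ ∪ X₂) (D₁ ∪ D₂) X₁ D₁ := by
  set U := X₁ ∪ X₂ with hU
  set E := D₁ ∪ D₂ with hE
  have hUE : U ⊆ E := union_subset_union hX1 hX2
  have hD1E : D₁ ⊆ E := subset_union_left
  have hD2E : D₂ ⊆ E := subset_union_right
  have hX1U : X₁ ⊆ U := subset_union_left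
  have hX2U : X₂ ⊆ U := subset_union_right
  have hEnn : ¬ QNull q.le E := nn_superset q hD1E hD1
  have hXdisj : X₁ ∩ X₂ = ∅ := by
    have : X₁ ∩ X₂ ⊆ D₁ ∩ D₂ := inter_subset_inter hX1 hX2
    rw [hdisj] at this
    exact subset_empty_iff.1 this
  by_cases hUn : QNull q.le U
  · have hX1null : QNull q.le X₁ := null_mono q hX1U hUn
    have h1 : QEquiv q.le U E ∅ E := null_cond q hUn hEnn
    have h2 : QEquiv q.le ∅ E ∅ D₁ := empty_eqv q hEnn hD1
    have h3 : QEquiv q.le ∅ D₁ X₁ D₁ := eqv_symm q (null_cond q hX1null hD1)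
    exact eqv_trans q hEnn hEnn hD1 h1 (eqv_trans q hEnn hD1 hD1 h2 h3)
  · have claim1 : ¬ QLt q.le X₁ D₁ U E := by
      intro h
      have h2 : QLt q.le X₂ D₂ U E := lt_of_eqv_lt q hD2 hD1 hEnn (eqv_symm q he) h
      have key : ∀ (X D : Set Δ), X ⊆ D → D ⊆ E → X ⊆ U → ¬ QNull q.le D →
          QLt q.le X D U E → QLt q.le X U D E := by
        intro X D hXD hDE hXU hDnn hlt
        have hnb : ¬ q.le D E X U := by
          intro hb
          have hc := q.ax6a_strict E D X E U X hXD hDE hXU hUE hEnn hDnn hEnn hUn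
            hb hlt.1 (Or.inr hlt)
          exact hc.2 (q.refl X E hEnn)
        have hle : q.le X U D E := by
          rcases q.total X U D E hUn hEnn with h' | h'
          · exact h'
          · exact absurd h' hnb
        exact ⟨hle, hnb⟩
      have b1 := key X₁ D₁ hX1 hD1E hX1U hD1 h
      have b2 := key X₂ D₂ hX2 hD2E hX2U hD2 h2
      have hc := q.ax5_strict X₁ X₂ D₁ D₂ U E hUn hEnn hXdisj hdisj b1.1 b2.1
        (Or.inl b1)
      exact hc.2 (q.ax3_id E U hEnn hUn).1
    have claim2 : ¬ QLt q.le U E X₁ D₁ := by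
      intro h
      have h2 : QLt q.le U E X₂ D₂ := lt_of_lt_eqv q hEnn hD1 hD2 h he
      have key : ∀ (X D : Set Δ), X ⊆ D → D ⊆ E → X ⊆ U → ¬ QNull q.le D →
          QLt q.le U E X D → QLt q.le D E X U := by
        intro X D hXD hDE hXU hDnn hlt
        have hnb : ¬ q.le X U D E := by
          intro hb
          have hc := q.ax6a_strict E U X E D X hXU hUE hXD hDE hEnn hUn hEnn hDnn
            hlt.1 hb (Or.inl hlt)
          exact hc.2 (q.refl X E hEnn)
        have hle : q.le D E X U := by
          rcases q.total D E X U hEnn hUn with h' | h'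
          · exact h'
          · exact absurd h' hnb
        exact ⟨hle, hnb⟩
      have b1 := key X₁ D₁ hX1 hD1E hX1U hD1 h
      have b2 := key X₂ D₂ hX2 hD2E hX2U hD2 h2
      have hc := q.ax5_strict D₁ D₂ X₁ X₂ E U hEnn hUn hdisj hXdisj b1.1 b2.1
        (Or.inl b1)
      exact hc.2 (q.ax3_id U E hUn hEnn).1
    exact eqv_of_not_lt q hEnn hD1 claim2 claim1

/-- Multi-piece version, by induction. -/
lemma multi : ∀ (n : ℕ) (D X : Fin n → Set Δ),
    (∀ i j, i ≠ j → D i ∩ D j = ∅) → (∀ i, ¬ QNull q.le (D i)) →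
    (∀ i, X i ⊆ D i) → (∀ i j, QEquiv q.le (X i) (D i) (X j) (D j)) →
    ∀ k, QEquiv q.le (⋃ i, X i) (⋃ i, D i) (X k) (D k) := by
  intro n
  induction n with
  | zero => intro D X _ _ _ _ k; exact k.elim0
  | succ m ih =>
    intro D X hdisj hDnn hXD heqv k
    have hsplit : ∀ f : Fin (m + 1) → Set Δ,
        (⋃ i, f i) = (⋃ i : Fin m, f i.castSucc) ∪ f (Fin.last m) := by
      intro f
      ext x
      simp only [mem_iUnion, mem_union]
      constructor
      · rintro ⟨i, hi⟩
        rcases Fin.eq_castSucc_or_eq_last i with ⟨j, rfl⟩ | rfl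
        · exact Or.inl ⟨j, hi⟩
        · exact Or.inr hi
      · rintro (⟨j, hj⟩ | hl)
        · exact ⟨j.castSucc, hj⟩
        · exact ⟨Fin.last m, hl⟩
    rw [hsplit X, hsplit D]
    have hUDnn : ¬ QNull q.le (⋃ i : Fin (m+1), D i) := by
      refine nn_superset q (subset_iUnion D k) (hDnn k)
    rcases Nat.eq_zero_or_pos m with rfl | hm
    · -- m = 0 : single piece
      simp only [iUnion_of_empty, empty_union]
      exact heqv (Fin.last 0) k
    · -- m ≥ 1
      set PX := ⋃ i : Fin m, X i.castSucc with hPX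
      set PD := ⋃ i : Fin m, D i.castSucc with hPD
      obtain ⟨m', rfl⟩ : ∃ m', m = m' + 1 := ⟨m - 1, by omega⟩
      have hih := ih (fun i => D i.castSucc) (fun i => X i.castSucc)
        (fun i j hij => hdisj _ _ (fun hc => hij (Fin.castSucc_injective _ hc)))
        (fun i => hDnn _) (fun i => hXD _)
        (fun i j => heqv _ _) 0
      have hPDnn : ¬ QNull q.le PD :=
        nn_superset q (subset_iUnion (fun i : Fin (m'+1) => D i.castSucc) 0) (hDnn _)
      have hPXsub : PX ⊆ PD := iUnion_mono (fun i => hXD _)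
      have hPDdisj : PD ∩ D (Fin.last (m'+1)) = ∅ := by
        rw [hPD, iUnion_inter]
        refine iUnion_eq_empty.2 (fun i => hdisj _ _ ?_)
        exact Fin.ne_last_of_lt (Fin.castSucc_lt_last i)
      have hlastE : QEquiv q.le PX PD (X (Fin.last (m'+1))) (D (Fin.last (m'+1))) :=
        eqv_trans q hPDnn (hDnn _) (hDnn _) hih (heqv _ _)
      have hmain := union_two q hPDdisj hPXsub (hXD _) hPDnn (hDnn _) hlastE
      refine eqv_trans q ?_ hPDnn (hDnn k) hmain (eqv_trans q hPDnn (hDnn _) (hDnn k) hih (heqv _ k))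
      exact nn_superset q subset_union_left hPDnn

end QCPAux

open QCPAux


/-- if `B 1, …, B n` partition `G`, each `A ∩ B i` is non-null,
`A ⟂_{B i} C i`, and `C i|B i ∼ C j|B j` for all `i, j`, then for every `k`,
`(⋃ i (C i ∩ B i))|(A ∩ G) ∼ C k|B k`. -/
theorem qcp_constant_conditional {Δ : Type*} (q : QCP Δ) (n : ℕ)
    (B C : Fin n → Set Δ) (G A : Set Δ)
    (hpart : (⋃ i, B i) = G)
    (hdisj : ∀ i j, i ≠ j → B i ∩ B j = ∅)
    (hBnn : ∀ i, ¬ QNull q.le (B i))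
    (hABnn : ∀ i, ¬ QNull q.le (A ∩ B i))
    (hind : ∀ i, QIndep q.le A (B i) (C i))
    (hconst : ∀ i j, QEquiv q.le (C i) (B i) (C j) (B j)) :
    ∀ k, QEquiv q.le (⋃ i, C i ∩ B i) (A ∩ G) (C k) (B k) := by
  intro k
  have hDunion : (⋃ i, A ∩ B i) = A ∩ G := by rw [← inter_iUnion, hpart]
  have hDdisj : ∀ i j, i ≠ j → (A ∩ B i) ∩ (A ∩ B j) = ∅ := by
    intro i j hij
    have h1 : (A ∩ B i) ∩ (A ∩ B j) ⊆ B i ∩ B j :=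
      inter_subset_inter inter_subset_right inter_subset_right
    rw [hdisj i j hij] at h1
    exact subset_empty_iff.1 h1
  have hXD : ∀ i, A ∩ (C i ∩ B i) ⊆ A ∩ B i :=
    fun i => inter_subset_inter_right A inter_subset_right
  have hpiece : ∀ i, QEquiv q.le (A ∩ (C i ∩ B i)) (A ∩ B i) (C i) (B i) :=
    fun i => piece q (hBnn i) (hABnn i) (hind i)
  have heqv : ∀ i j, QEquiv q.le (A ∩ (C i ∩ B i)) (A ∩ B i)
      (A ∩ (C j ∩ B j)) (A ∩ B j) := by
    intro i j
    refine eqv_trans q (hABnn i) (hBnn i) (hABnn j) (hpiece i) ?_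
    exact eqv_trans q (hBnn i) (hBnn j) (hABnn j) (hconst i j)
      (eqv_symm q (hpiece j))
  have hmulti := multi q n (fun i => A ∩ B i) (fun i => A ∩ (C i ∩ B i))
    hDdisj hABnn hXD heqv k
  rw [hDunion] at hmulti
  have hTnn : ¬ QNull q.le (A ∩ G) := by
    refine nn_superset q ?_ (hABnn k)
    rw [← hDunion]
    exact subset_iUnion (fun i => A ∩ B i) k
  have hsets : (⋃ i, C i ∩ B i) ∩ (A ∩ G) = ⋃ i, A ∩ (C i ∩ B i) := by
    ext x
    simp only [mem_iUnion, mem_inter_iff]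
    constructor
    · rintro ⟨⟨i, hc, hb⟩, ha, -⟩
      exact ⟨i, ha, hc, hb⟩
    · rintro ⟨i, ha, hc, hb⟩
      refine ⟨⟨i, hc, hb⟩, ha, ?_⟩
      rw [← hpart]
      exact mem_iUnion.2 ⟨i, hb⟩
  have hax4 := q.ax4 (⋃ i, C i ∩ B i) (A ∩ G) hTnn
  rw [hsets] at hax4
  refine eqv_trans q hTnn hTnn (hBnn k) (eqv_symm q hax4) ?_
  exact eqv_trans q hTnn (hABnn k) (hBnn k) hmulti (hpiece k)
end
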